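/- arXiv:2304.01626 — 7 statements merged into one kernel-verified Lean document; each statement's English description precedes it below -/
import Mathlib

section
/- Let G be a simple graph whose vertex set is partitioned into two sets P and L such that every edge joins a vertex of P to a vertex of L. Let k ≥ 1 and f ≥ 1 be natural numbers, suppose every vertex in P has degree exactly k+1, every vertex in L has degree exactly f+1, and G has no cycle of length less than 12. Then for every vertex p ∈ P, the number of vertices p' ∈ P at graph distance exactly 2 from p is (k+1)f, and the number of vertices p' ∈ P at graph distance exactly 4 from p is k(k+1)f². -/
/-!
Within half the girth, the neighbourhood of `p` is a tree: a vertex at distance `d + 1` from `p`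
has exactly one neighbour at distance `d` (two of them would close a cycle of length at most
`2d + 2`), and, the graph being bipartite, none at distance `d + 1`. So the sphere of radius
`d + 2` is the disjoint union, over the sphere of radius `d + 1`, of the `degree - 1` remaining
neighbours, and the spheres have sizes `k + 1`, `(k + 1) f`, `(k + 1) f k`, `(k + 1) f k f`.
Parity of distance decides the side of the bipartition, so the spheres of even radius lie in `P`.
-/

open SimpleGraph Finset

namespace SimpleGraph

variable {V : Type*} {G : SimpleGraph V} {s t : Set V} {u v w : V} {n : ℕ}

theorem Walk.IsPath.eq_of_length_add_length_lt_egirth {p q : G.Walk u v} (hp : p.IsPath)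
    (hq : q.IsPath) (hlen : p.length + q.length < G.egirth) : p = q := by
  by_contra hne
  obtain ⟨_, -, -, c, hc, hcl⟩ := hp.exists_isCycle_length_le_add_of_ne hq hne
  have := (egirth_le_length hc).trans_lt (lt_of_le_of_lt (by exact_mod_cast hcl) hlen)
  exact this.false

theorem IsBipartiteWith.mem_iff_mem_iff_even_length (h : G.IsBipartiteWith s t)
    (p : G.Walk u v) : (u ∈ s ↔ v ∈ s) ↔ Even p.length := by
  induction p with
  | nil => simp
  | @cons a b _ hadj _ ih =>
    have hab : a ∈ s ↔ b ∉ s := by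
      rcases h.mem_of_adj hadj with ⟨ha, hb⟩ | ⟨ha, hb⟩
      · simp [ha, Set.disjoint_right.mp h.disjoint hb]
      · simp [hb, Set.disjoint_left.mp h.disjoint.symm ha]
    rw [Walk.length_cons, Nat.even_add_one, ← ih]
    tauto

theorem IsBipartiteWith.mem_iff_mem_iff_even_dist (h : G.IsBipartiteWith s t)
    (hr : G.Reachable u v) : (u ∈ s ↔ v ∈ s) ↔ Even (G.dist u v) := by
  obtain ⟨p, hp⟩ := hr.exists_walk_length_eq_dist
  rw [← hp, h.mem_iff_mem_iff_even_length]

theorem IsBipartiteWith.dist_ne_of_adj (h : G.IsBipartiteWith s t) (hr : G.Reachable u v)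
    (hadj : G.Adj v w) : G.dist u v ≠ G.dist u w := by
  intro heq
  have hv := h.mem_iff_mem_iff_even_dist hr
  have hw := h.mem_iff_mem_iff_even_dist (hr.trans hadj.reachable)
  have hvw := h.mem_iff_mem_iff_even_length hadj.toWalk
  rw [← heq, ← hv] at hw
  simp only [Walk.length_cons, Walk.length_nil, zero_add, Nat.not_even_one, iff_false] at hvw
  tauto

theorem exists_adj_dist_eq_of_dist_eq_add_one (h : G.dist u v = n + 1) :
    ∃ w, G.Adj v w ∧ G.dist u w = n := by
  obtain ⟨p, hp⟩ := exists_walk_of_dist_ne_zero (show G.dist u v ≠ 0 by omega)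
  rw [← Walk.length_reverse] at hp
  cases hq : p.reverse with
  | nil => simp at h
  | cons hadj q =>
    refine ⟨_, hadj, ?_⟩
    rw [hq, Walk.length_cons] at hp
    have hle := dist_le q.reverse
    rw [Walk.length_reverse] at hle
    rcases hadj.diff_dist_adj (u := u) with h' | h' | h' <;> omega

theorem eq_of_adj_of_dist_eq (hg : 2 * (n + 1) < G.egirth) (hv : G.dist u v = n + 1)
    {w₁ w₂ : V} (h₁ : G.Adj w₁ v) (h₂ : G.Adj w₂ v) (hd₁ : G.dist u w₁ = n)
    (hd₂ : G.dist u w₂ = n) : w₁ = w₂ := by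
  have hr : G.Reachable u v := Reachable.of_dist_ne_zero (by omega)
  obtain ⟨q₁, hq₁⟩ := (hr.trans h₁.symm.reachable).exists_walk_length_eq_dist
  obtain ⟨q₂, hq₂⟩ := (hr.trans h₂.symm.reachable).exists_walk_length_eq_dist
  have hp₁ := (q₁.concat h₁).isPath_of_length_eq_dist (by simp [hq₁, hd₁, hv])
  have hp₂ := (q₂.concat h₂).isPath_of_length_eq_dist (by simp [hq₂, hd₂, hv])
  have heq := hp₁.eq_of_length_add_length_lt_egirth hp₂ (by
    simp only [Walk.length_concat, hq₁, hq₂, hd₁, hd₂]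
    convert hg using 1
    push_cast
    ring)
  exact (Walk.concat_inj heq).1

variable [Fintype V]

noncomputable def distSphere (G : SimpleGraph V) (u : V) (n : ℕ) : Finset V :=
  {v | G.dist u v = n}

@[simp]
theorem mem_distSphere : v ∈ G.distSphere u n ↔ G.dist u v = n := by
  simp [distSphere]

variable [DecidableRel G.Adj]

theorem distSphere_one : G.distSphere u 1 = G.neighborFinset u := by
  ext v
  simp

theorem card_filter_neighborFinset_dist_eq_add_two (h : G.IsBipartiteWith s t)
    (hg : 2 * (n + 1) < G.egirth) (hv : G.dist u v = n + 1) :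
    #{w ∈ G.neighborFinset v | G.dist u w = n + 2} = G.degree v - 1 := by
  classical
  obtain ⟨a, hva, ha⟩ := exists_adj_dist_eq_of_dist_eq_add_one hv
  have hr : G.Reachable u v := Reachable.of_dist_ne_zero (by omega)
  have hchildren :
      {w ∈ G.neighborFinset v | G.dist u w = n + 2} = (G.neighborFinset v).erase a := by
    ext w
    simp only [mem_filter, mem_neighborFinset, mem_erase]
    constructor
    · rintro ⟨hvw, hw⟩
      exact ⟨by rintro rfl; omega, hvw⟩
    · rintro ⟨hwa, hvw⟩
      refine ⟨hvw, ?_⟩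
      have hne := h.dist_ne_of_adj hr hvw
      rcases hvw.diff_dist_adj (u := u) with h' | h' | h'
      · omega
      · omega
      · exact absurd (eq_of_adj_of_dist_eq hg hv hvw.symm hva.symm (by omega) ha) hwa
  rw [hchildren, card_erase_of_mem (by simpa using hva), card_neighborFinset_eq_degree]

theorem card_distSphere_add_two (h : G.IsBipartiteWith s t) (hg : 2 * (n + 2) < G.egirth) :
    #(G.distSphere u (n + 2)) = ∑ v ∈ G.distSphere u (n + 1), (G.degree v - 1) := by
  classical
  have hg' : 2 * (n + 1) < G.egirth := lt_of_le_of_lt (by norm_cast; omega) hg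
  have hunion : G.distSphere u (n + 2) = (G.distSphere u (n + 1)).biUnion
      fun v => {w ∈ G.neighborFinset v | G.dist u w = n + 2} := by
    ext w
    simp only [mem_distSphere, mem_biUnion, mem_filter, mem_neighborFinset]
    refine ⟨fun hw => ?_, fun ⟨_, _, _, hw⟩ => hw⟩
    obtain ⟨v, hwv, hv⟩ := exists_adj_dist_eq_of_dist_eq_add_one hw
    exact ⟨v, hv, hwv.symm, hw⟩
  rw [hunion, card_biUnion]
  · exact sum_congr rfl fun v hv =>
      card_filter_neighborFinset_dist_eq_add_two h hg' (mem_distSphere.mp hv)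
  · intro v₁ hv₁ v₂ hv₂ hne
    refine Finset.disjoint_left.mpr fun w hw₁ hw₂ => hne ?_
    simp only [mem_filter, mem_neighborFinset] at hw₁ hw₂
    exact eq_of_adj_of_dist_eq hg hw₁.2 hw₁.1 hw₂.1 (mem_distSphere.mp hv₁)
      (mem_distSphere.mp hv₂)

theorem card_distSphere_add_two_of_degree_eq (h : G.IsBipartiteWith s t)
    (hg : 2 * (n + 2) < G.egirth) {m : ℕ}
    (hdeg : ∀ v ∈ G.distSphere u (n + 1), G.degree v = m + 1) :
    #(G.distSphere u (n + 2)) = #(G.distSphere u (n + 1)) * m := by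
  rw [card_distSphere_add_two h hg, sum_const_nat fun v hv => by rw [hdeg v hv, Nat.add_sub_cancel]]

end SimpleGraph

theorem stmt_2_general (V : Type) [Fintype V] (G : SimpleGraph V) [DecidableRel G.Adj]
    (P L : Set V) (hdisj : P ∩ L = ∅) (huniv : P ∪ L = Set.univ)
    (hbip : ∀ x y, G.Adj x y → (x ∈ P ∧ y ∈ L) ∨ (x ∈ L ∧ y ∈ P))
    (k f : ℕ)
    (hdegP : ∀ v ∈ P, G.degree v = k + 1)
    (hdegL : ∀ v ∈ L, G.degree v = f + 1)
    (hgirth : ∀ (v : V) (c : G.Walk v v), c.IsCycle → 12 ≤ c.length)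
    (p : V) (hp : p ∈ P) :
    {p' : V | p' ∈ P ∧ G.dist p p' = 2}.ncard = (k + 1) * f ∧
    {p' : V | p' ∈ P ∧ G.dist p p' = 4}.ncard = k * (k + 1) * f ^ 2 := by
  have hG : G.IsBipartiteWith P L := ⟨Set.disjoint_iff_inter_eq_empty.mpr hdisj, hbip⟩
  have hg : 12 ≤ G.egirth := le_egirth.mpr fun v c hc => by exact_mod_cast hgirth v c hc
  have hmem (n : ℕ) (v : V) (hv : G.dist p v = n + 1) : v ∈ P ↔ Even (n + 1) := by
    rw [← hv, ← hG.mem_iff_mem_iff_even_dist (Reachable.of_dist_ne_zero (by omega)),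
      iff_true_left hp]
  have hmemEven (n : ℕ) (v : V) (hv : G.dist p v = 2 * n + 2) : v ∈ P :=
    (hmem _ v hv).mpr ⟨n + 1, by ring⟩
  have hdegOdd (n : ℕ) : ∀ v ∈ G.distSphere p (2 * n + 1), G.degree v = f + 1 := fun v hv =>
    hdegL v <| (huniv ▸ Set.mem_univ v : v ∈ P ∪ L).resolve_left fun hvP =>
      Nat.not_even_two_mul_add_one n ((hmem _ v (mem_distSphere.mp hv)).mp hvP)
  have hdegEven (n : ℕ) : ∀ v ∈ G.distSphere p (2 * n + 2), G.degree v = k + 1 := fun v hv =>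
    hdegP v (hmemEven n v (mem_distSphere.mp hv))
  have hsphere (n : ℕ) :
      {p' | p' ∈ P ∧ G.dist p p' = 2 * n + 2} = ↑(G.distSphere p (2 * n + 2)) := by
    ext v
    simpa using hmemEven n v
  have hS1 : #(G.distSphere p 1) = k + 1 := by
    rw [distSphere_one, card_neighborFinset_eq_degree, hdegP p hp]
  have hS2 := card_distSphere_add_two_of_degree_eq hG (n := 0)
    (by grw [← hg]; norm_num) (hdegOdd 0)
  have hS3 := card_distSphere_add_two_of_degree_eq hG (n := 1)
    (by grw [← hg]; norm_num) (hdegEven 0)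
  have hS4 := card_distSphere_add_two_of_degree_eq hG (n := 2)
    (by grw [← hg]; norm_num) (hdegOdd 1)
  constructor
  · rw [hsphere 0, Set.ncard_coe_finset, hS2, hS1]
  · rw [hsphere 1, Set.ncard_coe_finset, hS4, hS3, hS2, hS1]
    ring

/-- In a bipartite graph with parts `P` and `L`, where every vertex of `P`
has degree exactly `k+1`, every vertex of `L` has degree exactly `f+1`, and there is no
cycle of length less than `12`, for every `p ∈ P` the number of vertices of `P` at graph
distance exactly `2` from `p` is `(k+1)f` and the number at distance exactly `4` is
`k(k+1)f²`. -/
theorem stmt_2 (V : Type) [Fintype V] (G : SimpleGraph V) [DecidableRel G.Adj]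
    (P L : Set V) (hdisj : P ∩ L = ∅) (huniv : P ∪ L = Set.univ)
    (hbip : ∀ x y, G.Adj x y → (x ∈ P ∧ y ∈ L) ∨ (x ∈ L ∧ y ∈ P))
    (k f : ℕ) (hk : 1 ≤ k) (hf : 1 ≤ f)
    (hdegP : ∀ v ∈ P, G.degree v = k + 1)
    (hdegL : ∀ v ∈ L, G.degree v = f + 1)
    (hgirth : ∀ (v : V) (c : G.Walk v v), c.IsCycle → 12 ≤ c.length)
    (p : V) (hp : p ∈ P) :
    {p' : V | p' ∈ P ∧ G.dist p p' = 2}.ncard = (k + 1) * f ∧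
    {p' : V | p' ∈ P ∧ G.dist p p' = 4}.ncard = k * (k + 1) * f ^ 2 :=
  stmt_2_general V G P L hdisj huniv hbip k f hdegP hdegL hgirth p hp
end

section
/- Let G be a group, α an automorphism of G with α∘α∘α = id, and let a, b ∈ G satisfy a ≠ 1, b ≠ 1, a ≠ b, a² = 1, b² = 1, ab = ba, α(a) = b and α(b) = ab. Let H = {1, a, b, ab} be the subgroup generated by a and b. If a right coset H·x is α-invariant (that is, the image of the set H·x under α equals H·x), then H·x contains exactly one element fixed by α. -/
/-- Let `α` be an automorphism of a group `G` with `α³ = id`, and let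
`a, b` be distinct commuting involutions with `α a = b`, `α b = a*b`. If a right coset
`H·x` of `H = ⟨a, b⟩ = {1, a, b, ab}` is `α`-invariant, then it contains exactly one
element fixed by `α`. -/
theorem stmt_3 (G : Type) [Group G] (α : G ≃* G) (hα : ∀ g, α (α (α g)) = g)
    (a b : G) (ha : a ≠ 1) (hb : b ≠ 1) (hab : a ≠ b)
    (ha2 : a ^ 2 = 1) (hb2 : b ^ 2 = 1) (hcomm : a * b = b * a)
    (haa : α a = b) (hba : α b = a * b)
    (x : G)
    (hinv : (⇑α) '' ((fun g => g * x) '' ((Subgroup.closure {a, b} : Subgroup G) : Set G)) =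
      (fun g => g * x) '' ((Subgroup.closure {a, b} : Subgroup G) : Set G)) :
    ∃! g, g ∈ (fun g => g * x) '' ((Subgroup.closure {a, b} : Subgroup G) : Set G) ∧
      α g = g := by
  have haa' : a * a = 1 := by rw [← sq]; exact ha2
  have hbb' : b * b = 1 := by rw [← sq]; exact hb2
  have hainv : a⁻¹ = a := by rw [inv_eq_iff_mul_eq_one]; exact haa'
  have hbinv : b⁻¹ = b := by rw [inv_eq_iff_mul_eq_one]; exact hbb'
  have habab : (a*b) * (a*b) = 1 := by
    calc (a*b)*(a*b) = a*((b*a)*b) := by group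
    _ = a*((a*b)*b) := by rw [hcomm]
    _ = (a*a)*(b*b) := by group
    _ = 1 := by rw [haa', hbb', one_mul]
  have hab1 : a * b ≠ 1 := by
    intro h
    apply hab
    have : b = a⁻¹ := eq_inv_of_mul_eq_one_left (by rw [← hcomm]; exact h)
    rw [this, hainv]
  have habna : a * b ≠ a := by
    intro h; apply hb
    nth_rewrite 2 [← mul_one a] at h
    exact mul_left_cancel h
  have habnb : a * b ≠ b := by
    intro h; apply ha
    nth_rewrite 2 [← one_mul b] at h
    exact mul_right_cancel h
  -- auxiliary products
  have e1 : a * (a * b) = b := by rw [← mul_assoc, haa', one_mul]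
  have e2 : b * (a * b) = a := by
    calc b * (a * b) = (b*a)*b := by group
    _ = (a*b)*b := by rw [hcomm]
    _ = a*(b*b) := by group
    _ = a := by rw [hbb', mul_one]
  have e3 : (a*b) * a = b := by
    calc (a*b) * a = a*(b*a) := by group
    _ = a*(a*b) := by rw [hcomm]
    _ = b := e1
  have e4 : (a*b) * b = a := by rw [mul_assoc, hbb', mul_one]
  -- the subgroup as a set
  have hK : ((Subgroup.closure {a, b} : Subgroup G) : Set G) = {1, a, b, a*b} := by
    have hsub : Subgroup.closure {a, b} ≤
        { carrier := {1, a, b, a*b}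
          one_mem' := Or.inl rfl
          mul_mem' := by
            rintro p q hp hq
            rcases hp with h1|h1|h1|h1 <;> rcases hq with h2|h2|h2|h2 <;> rw [h1, h2]
            · exact Or.inl (one_mul 1)
            · exact Or.inr (Or.inl (one_mul a))
            · exact Or.inr (Or.inr (Or.inl (one_mul b)))
            · exact Or.inr (Or.inr (Or.inr (one_mul (a*b))))
            · exact Or.inr (Or.inl (mul_one a))
            · exact Or.inl haa'
            · exact Or.inr (Or.inr (Or.inr rfl))
            · exact Or.inr (Or.inr (Or.inl e1))
            · exact Or.inr (Or.inr (Or.inl (mul_one b)))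
            · exact Or.inr (Or.inr (Or.inr hcomm.symm))
            · exact Or.inl hbb'
            · exact Or.inr (Or.inl e2)
            · exact Or.inr (Or.inr (Or.inr (mul_one (a*b))))
            · exact Or.inr (Or.inr (Or.inl e3))
            · exact Or.inr (Or.inl e4)
            · exact Or.inl habab
          inv_mem' := by
            rintro p hp
            rcases hp with h1|h1|h1|h1 <;> rw [h1]
            · simp
            · rw [hainv]; right; left; rfl
            · rw [hbinv]; right; right; left; rfl
            · have : (a*b)⁻¹ = a*b := by rw [inv_eq_iff_mul_eq_one]; exact habab
              rw [this]; right; right; right; rfl } := by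
      rw [Subgroup.closure_le]
      rintro p (rfl|rfl)
      · right; left; rfl
      · right; right; left; rfl
    have hsup : ({1, a, b, a*b} : Set G) ⊆ (Subgroup.closure {a, b} : Subgroup G) := by
      have hma : a ∈ Subgroup.closure {a, b} := Subgroup.subset_closure (Or.inl rfl)
      have hmb : b ∈ Subgroup.closure {a, b} := Subgroup.subset_closure (Or.inr rfl)
      rintro p (rfl|rfl|rfl|rfl)
      · exact Subgroup.one_mem _
      · exact hma
      · exact hmb
      · exact Subgroup.mul_mem _ hma hmb
    exact le_antisymm hsub hsup
  -- coset membership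
  have hcos : ∀ g : G, g ∈ (fun g => g * x) '' ((Subgroup.closure {a, b} : Subgroup G) : Set G) ↔
      g = x ∨ g = a*x ∨ g = b*x ∨ g = a*b*x := by
    intro g
    rw [hK]
    constructor
    · rintro ⟨p, (rfl|rfl|rfl|rfl), rfl⟩
      · left; exact one_mul x
      · right; left; rfl
      · right; right; left; rfl
      · right; right; right; rfl
    · rintro (h|h|h|h)
      · exact ⟨1, Or.inl rfl, by rw [h]; exact one_mul x⟩
      · exact ⟨a, Or.inr (Or.inl rfl), h.symm⟩
      · exact ⟨b, Or.inr (Or.inr (Or.inl rfl)), h.symm⟩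
      · exact ⟨a*b, Or.inr (Or.inr (Or.inr rfl)), h.symm⟩
  have hαab : α (a*b) = a := by rw [map_mul, haa, hba]; exact e2
  -- α x lies in the coset
  have hx : α x ∈ (fun g => g * x) '' ((Subgroup.closure {a, b} : Subgroup G) : Set G) := by
    rw [← hinv]
    exact Set.mem_image_of_mem _ ((hcos x).2 (Or.inl rfl))
  have cne : ∀ p q : G, p ≠ q → p * x ≠ q * x := fun p q h hpq => h (mul_right_cancel hpq)
  have cne1 : ∀ p : G, p ≠ 1 → p * x ≠ x := by
    intro p h hpq
    apply h
    nth_rewrite 2 [← one_mul x] at hpq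
    exact mul_right_cancel hpq
  rw [hcos (α x)] at hx
  rcases hx with h | h | h | h
  · -- α x = x : fixed point x
    refine ⟨x, ⟨(hcos x).2 (Or.inl rfl), h⟩, ?_⟩
    rintro g ⟨hg, hfix⟩
    rcases (hcos g).1 hg with rfl | rfl | rfl | rfl
    · rfl
    · exfalso; rw [map_mul, haa, h] at hfix; exact cne b a (Ne.symm hab) hfix
    · exfalso; rw [map_mul, hba, h] at hfix; exact cne (a*b) b habnb hfix
    · exfalso; rw [map_mul, hαab, h] at hfix; exact cne a (a*b) (Ne.symm habna) hfix
  · -- α x = a*x : fixed point b*x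
    have hfixb : α (b*x) = b*x := by
      rw [map_mul, hba, h]
      calc (a*b)*(a*x) = ((a*b)*a)*x := by group
      _ = b*x := by rw [e3]
    refine ⟨b*x, ⟨(hcos _).2 (Or.inr (Or.inr (Or.inl rfl))), hfixb⟩, ?_⟩
    rintro g ⟨hg, hfix⟩
    rcases (hcos g).1 hg with rfl | rfl | rfl | rfl
    · exfalso; rw [h] at hfix; exact cne1 a ha hfix
    · exfalso
      rw [map_mul, haa, h] at hfix
      have : (b*a)*x = a*x := by rw [mul_assoc]; exact hfix
      rw [← hcomm] at this
      exact cne (a*b) a habna this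
    · rfl
    · exfalso
      rw [map_mul, hαab, h] at hfix
      have : (a*(a*x)) = a*b*x := hfix
      rw [← mul_assoc, haa', one_mul] at this
      exact cne1 (a*b) hab1 this.symm
  · -- α x = b*x : fixed point a*b*x
    have hfixab : α (a*b*x) = a*b*x := by
      rw [map_mul, hαab, h, ← mul_assoc]
    refine ⟨a*b*x, ⟨(hcos _).2 (Or.inr (Or.inr (Or.inr rfl))), hfixab⟩, ?_⟩
    rintro g ⟨hg, hfix⟩
    rcases (hcos g).1 hg with rfl | rfl | rfl | rfl
    · exfalso; rw [h] at hfix; exact cne1 b hb hfix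
    · exfalso
      rw [map_mul, haa, h] at hfix
      have : (b*b)*x = a*x := by rw [mul_assoc]; exact hfix
      rw [hbb', one_mul] at this
      exact cne1 a ha this.symm
    · exfalso
      rw [map_mul, hba, h] at hfix
      have : ((a*b)*b)*x = b*x := by rw [mul_assoc]; exact hfix
      rw [e4] at this
      exact cne a b hab this
    · rfl
  · -- α x = a*b*x : fixed point a*x
    have hfixa : α (a*x) = a*x := by
      rw [map_mul, haa, h]
      calc b*(a*b*x) = (b*(a*b))*x := by group
      _ = a*x := by rw [e2]
    refine ⟨a*x, ⟨(hcos _).2 (Or.inr (Or.inl rfl)), hfixa⟩, ?_⟩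
    rintro g ⟨hg, hfix⟩
    rcases (hcos g).1 hg with rfl | rfl | rfl | rfl
    · exfalso; rw [h] at hfix; exact cne1 (a*b) hab1 hfix
    · rfl
    · exfalso
      rw [map_mul, hba, h] at hfix
      have : ((a*b)*(a*b))*x = b*x := by rw [mul_assoc]; exact hfix
      rw [habab, one_mul] at this
      exact cne1 b hb this.symm
    · exfalso
      rw [map_mul, hαab, h] at hfix
      have : (a*(a*b))*x = (a*b)*x := by rw [mul_assoc]; exact hfix
      rw [e1] at this
      exact cne b (a*b) (Ne.symm habnb) this
end

section
/- Let G be a finite group, α an automorphism of G with α∘α∘α = id, and let a, b ∈ G satisfy a ≠ 1, b ≠ 1, a ≠ b, a² = 1, b² = 1, ab = ba, α(a) = b and α(b) = ab. Let H = {1, a, b, ab} be the subgroup generated by a and b. Then the number of right cosets H·x that are α-invariant (that is, α maps the set H·x onto itself) equals the number of elements of G fixed by α. -/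
/-- Let `α` be an automorphism of a finite group `G` with `α³ = id`, and let
`a, b` be distinct commuting involutions with `α a = b`, `α b = a*b`, and
`H = ⟨a, b⟩ = {1, a, b, ab}`. Then the number of `α`-invariant right cosets of `H`
equals the number of elements of `G` fixed by `α`. -/
theorem stmt_4 (G : Type) [Group G] [Fintype G] (α : G ≃* G) (hα : ∀ g, α (α (α g)) = g)
    (a b : G) (ha : a ≠ 1) (hb : b ≠ 1) (hab : a ≠ b)
    (ha2 : a ^ 2 = 1) (hb2 : b ^ 2 = 1) (hcomm : a * b = b * a)
    (haa : α a = b) (hba : α b = a * b) :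
    {s : Set G |
        (∃ x : G, s = (fun g => g * x) '' ((Subgroup.closure {a, b} : Subgroup G) : Set G)) ∧
        (⇑α) '' s = s}.ncard =
      {g : G | α g = g}.ncard := by
  have ha' : a * a = 1 := by rw [← sq]; exact ha2
  have hb' : b * b = 1 := by rw [← sq]; exact hb2
  have hcomm' : b * a = a * b := hcomm.symm
  have haa' : ∀ x : G, a * (a * x) = x := fun x => by rw [← mul_assoc, ha', one_mul]
  have hbb' : ∀ x : G, b * (b * x) = x := fun x => by rw [← mul_assoc, hb', one_mul]
  have hswap : ∀ x : G, b * (a * x) = a * (b * x) := fun x => by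
    rw [← mul_assoc, hcomm', mul_assoc]
  set H := (Subgroup.closure ({a, b} : Set G) : Subgroup G) with hHdef
  set P : G → Prop := fun k => k = 1 ∨ k = a ∨ k = b ∨ k = a * b with hP
  have hmul : ∀ u v : G, P u → P v → P (u * v) := by
    intro u v hu hv
    rcases hu with rfl | rfl | rfl | rfl <;> rcases hv with rfl | rfl | rfl | rfl <;>
      simp [hP, mul_assoc, haa', hbb', hswap, ha', hb', hcomm']
  have hinv : ∀ u : G, P u → P u⁻¹ := by
    intro u hu
    rcases hu with rfl | rfl | rfl | rfl
    · simp [hP]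
    · rw [inv_eq_of_mul_eq_one_left ha']; simp [hP]
    · rw [inv_eq_of_mul_eq_one_left hb']; simp [hP]
    · rw [inv_eq_of_mul_eq_one_left (by simp [mul_assoc, hswap, haa', hbb', hb', ha'] :
        (a * b) * (a * b) = 1)]
      simp [hP]
  have hmem : ∀ k : G, k ∈ H ↔ P k := by
    intro k
    constructor
    · intro hk
      induction hk using Subgroup.closure_induction with
      | mem x hx =>
        simp only [Set.mem_insert_iff, Set.mem_singleton_iff] at hx
        rcases hx with h | h <;> simp [hP, h]
      | one => simp [hP]
      | mul x y hx hy px py => exact hmul x y px py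
      | inv x hx px => exact hinv x px
    · intro hk
      rcases hk with rfl | rfl | rfl | rfl
      · exact one_mem H
      · exact Subgroup.subset_closure (by simp)
      · exact Subgroup.subset_closure (by simp)
      · exact mul_mem (Subgroup.subset_closure (by simp))
          (Subgroup.subset_closure (by simp))
  have hαab : α (a * b) = a := by
    rw [map_mul, haa, hba, hswap, hb', mul_one]
  -- α fixes only 1 in H
  have hfixH : ∀ k : G, k ∈ H → α k = k → k = 1 := by
    intro k hk hfk
    rcases (hmem k).1 hk with h | h | h | h
    · exact h
    · rw [h, haa] at hfk; exact absurd hfk.symm hab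
    · rw [h, hba] at hfk
      have h2 : a * (b * b) = b * b := by rw [← mul_assoc, hfk]
      rw [hb', mul_one] at h2
      exact absurd h2 ha
    · rw [h, hαab] at hfk
      have h2 : a * 1 = a * b := by rw [mul_one]; exact hfk
      exact absurd (mul_left_cancel h2).symm hb
  have hαH : (⇑α) '' ((H : Set G)) = (H : Set G) := by
    ext y
    simp only [Set.mem_image, SetLike.mem_coe]
    constructor
    · rintro ⟨k, hk, rfl⟩
      rcases (hmem k).1 hk with h | h | h | h <;> rw [h]
      · rw [map_one]; exact one_mem H
      · rw [haa]; exact (hmem b).2 (by simp [hP])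
      · rw [hba]; exact (hmem (a*b)).2 (by simp [hP])
      · rw [hαab]; exact (hmem a).2 (by simp [hP])
    · intro hy
      rcases (hmem y).1 hy with h | h | h | h <;> rw [h]
      · exact ⟨1, one_mem H, map_one α⟩
      · exact ⟨a*b, (hmem _).2 (by simp [hP]), hαab⟩
      · exact ⟨a, (hmem a).2 (by simp [hP]), haa⟩
      · exact ⟨b, (hmem b).2 (by simp [hP]), hba⟩
  set f : G → Set G := fun x => (fun g => g * x) '' ((H : Set G)) with hf
  have hcoset : ∀ k x : G, k ∈ H → f (k * x) = f x := by
    intro k x hk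
    ext y
    simp only [hf, Set.mem_image, SetLike.mem_coe]
    constructor
    · rintro ⟨h, hh, rfl⟩
      exact ⟨h * k, mul_mem hh hk, by rw [mul_assoc]⟩
    · rintro ⟨h, hh, rfl⟩
      exact ⟨h * k⁻¹, mul_mem hh (inv_mem hk), by rw [mul_assoc, inv_mul_cancel_left]⟩
  have key : {s : Set G | (∃ x : G, s = f x) ∧ (⇑α) '' s = s} = f '' {g : G | α g = g} := by
    ext s
    simp only [Set.mem_setOf_eq, Set.mem_image]
    constructor
    · rintro ⟨⟨x, rfl⟩, hinvs⟩
      have hx : x ∈ f x := ⟨1, one_mem H, one_mul x⟩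
      have hαx : α x ∈ f x := by rw [← hinvs]; exact ⟨x, hx, rfl⟩
      obtain ⟨h, hh, hhx⟩ := hαx
      simp only at hhx
      rcases (hmem h).1 hh with e | e | e | e <;> rw [e] at hhx
      · exact ⟨x, by show α x = x; rw [← hhx, one_mul], rfl⟩
      · refine ⟨b * x, ?_, hcoset b x ((hmem b).2 (by simp [hP]))⟩
        show α (b * x) = b * x
        rw [map_mul, hba, ← hhx, mul_assoc a b, hswap, haa']
      · refine ⟨(a * b) * x, ?_, hcoset (a*b) x ((hmem _).2 (by simp [hP]))⟩
        show α ((a * b) * x) = (a * b) * x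
        rw [map_mul, hαab, ← hhx, ← mul_assoc]
      · refine ⟨a * x, ?_, hcoset a x ((hmem a).2 (by simp [hP]))⟩
        show α (a * x) = a * x
        rw [map_mul, haa, ← hhx, mul_assoc a b x, hswap, hbb']
    · rintro ⟨g, hg, rfl⟩
      refine ⟨⟨g, rfl⟩, ?_⟩
      have hg' : α g = g := hg
      rw [hf]
      rw [← Set.image_comp, show (⇑α) ∘ (fun h => h * g) = (fun h => h * g) ∘ (⇑α) from
        funext fun k => by simp [Function.comp, map_mul, hg'], Set.image_comp, hαH]
  rw [show {s : Set G |
        (∃ x : G, s = (fun g => g * x) '' ((Subgroup.closure {a, b} : Subgroup G) : Set G)) ∧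
        (⇑α) '' s = s} = {s : Set G | (∃ x : G, s = f x) ∧ (⇑α) '' s = s} from rfl, key]
  apply Set.ncard_image_of_injOn
  intro g hg g' hg' hgg'
  have hgin : g ∈ f g' := by rw [← hgg']; exact ⟨1, one_mem H, one_mul g⟩
  obtain ⟨k, hk, hkg⟩ := hgin
  simp only at hkg
  have hfg : α g = g := hg
  have hfg' : α g' = g' := hg'
  have hak : α k = k := by
    have h2 : α (k * g') = k * g' := by rw [hkg, hfg]
    rw [map_mul, hfg'] at h2
    exact mul_right_cancel h2
  rw [← hkg, hfixH k hk hak, one_mul]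
end

section
/- Let F be a finite field with q elements, V = F⁷ with coordinates indexed 0,…,6, and Q the quadratic form Q(x) = x₀x₄ + x₁x₅ + x₂x₆ − x₃² on V. For every singular point P (a 1-dimensional subspace of V on which Q vanishes), the number of absolute lines containing P is exactly q + 1. -/
variable {F : Type} [Field F]

/-- The quadratic form `Q(x) = x₀x₄ + x₁x₅ + x₂x₆ − x₃²` on `F⁷`. -/
def quadForm (x : Fin 7 → F) : F :=
  x 0 * x 4 + x 1 * x 5 + x 2 * x 6 - x 3 ^ 2

/-- A singular point: a 1-dimensional subspace of `F⁷` on which `Q` vanishes. -/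
def SingularPoint (W : Submodule F (Fin 7 → F)) : Prop :=
  Module.finrank F W = 1 ∧ ∀ x ∈ W, quadForm x = 0

/-- A totally singular line: a 2-dimensional subspace of `F⁷` on which `Q` vanishes. -/
def TotallySingularLine (W : Submodule F (Fin 7 → F)) : Prop :=
  Module.finrank F W = 2 ∧ ∀ x ∈ W, quadForm x = 0

/-- Grassmann coordinate `m_{ij} = u_i v_j − u_j v_i` of the pair `(u, v)`. -/
def grass (u v : Fin 7 → F) (i j : Fin 7) : F := u i * v j - u j * v i

/-- The hexagon equations for a pair of vectors `(u, v)`. -/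
def HexEq (u v : Fin 7 → F) : Prop :=
  grass u v 1 2 = grass u v 3 4 ∧ grass u v 5 4 = grass u v 3 2 ∧
  grass u v 2 0 = grass u v 3 5 ∧ grass u v 6 5 = grass u v 3 0 ∧
  grass u v 0 1 = grass u v 3 6 ∧ grass u v 4 6 = grass u v 3 1

/-- A subspace satisfies the hexagon equations if every pair of its vectors does
(for a 2-dimensional subspace this is independent of the choice of basis). -/
def SatisfiesHexEq (W : Submodule F (Fin 7 → F)) : Prop :=
  ∀ u ∈ W, ∀ v ∈ W, HexEq u v

/-- An absolute line: a totally singular line satisfying the hexagon equations. -/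
def AbsoluteLine (W : Submodule F (Fin 7 → F)) : Prop :=
  TotallySingularLine W ∧ SatisfiesHexEq W

/-- A moving line: a totally singular line not satisfying the hexagon equations. -/
def MovingLine (W : Submodule F (Fin 7 → F)) : Prop :=
  TotallySingularLine W ∧ ¬ SatisfiesHexEq W

set_option linter.unusedSectionVars false
set_option maxHeartbeats 1000000

lemma v7_0 (a b c d e f g : F) : (![a,b,c,d,e,f,g] : Fin 7 → F) 0 = a := rfl
lemma v7_1 (a b c d e f g : F) : (![a,b,c,d,e,f,g] : Fin 7 → F) 1 = b := rfl
lemma v7_2 (a b c d e f g : F) : (![a,b,c,d,e,f,g] : Fin 7 → F) 2 = c := rfl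
lemma v7_3 (a b c d e f g : F) : (![a,b,c,d,e,f,g] : Fin 7 → F) 3 = d := rfl
lemma v7_4 (a b c d e f g : F) : (![a,b,c,d,e,f,g] : Fin 7 → F) 4 = e := rfl
lemma v7_5 (a b c d e f g : F) : (![a,b,c,d,e,f,g] : Fin 7 → F) 5 = f := rfl
lemma v7_6 (a b c d e f g : F) : (![a,b,c,d,e,f,g] : Fin 7 → F) 6 = g := rfl

lemma fm7_0 (h : 0 < 7) : (⟨0, h⟩ : Fin 7) = 0 := rfl
lemma fm7_1 (h : 1 < 7) : (⟨1, h⟩ : Fin 7) = 1 := rfl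
lemma fm7_2 (h : 2 < 7) : (⟨2, h⟩ : Fin 7) = 2 := rfl
lemma fm7_3 (h : 3 < 7) : (⟨3, h⟩ : Fin 7) = 3 := rfl
lemma fm7_4 (h : 4 < 7) : (⟨4, h⟩ : Fin 7) = 4 := rfl
lemma fm7_5 (h : 5 < 7) : (⟨5, h⟩ : Fin 7) = 5 := rfl
lemma fm7_6 (h : 6 < 7) : (⟨6, h⟩ : Fin 7) = 6 := rfl

def Bform (u v : Fin 7 → F) : F :=
  u 0 * v 4 + u 4 * v 0 + u 1 * v 5 + u 5 * v 1 + u 2 * v 6 + u 6 * v 2 - 2 * u 3 * v 3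

lemma quad_comb (a b : F) (u v : Fin 7 → F) :
    quadForm (a • u + b • v) = a^2 * quadForm u + a*b * Bform u v + b^2 * quadForm v := by
  simp only [quadForm, Bform, Pi.add_apply, Pi.smul_apply, smul_eq_mul]; ring

lemma bform_add (u v : Fin 7 → F) : Bform u v = quadForm (u + v) - quadForm u - quadForm v := by
  simp only [quadForm, Bform, Pi.add_apply]; ring

lemma grass_right (a b : F) (u v w : Fin 7 → F) (i j : Fin 7) :
    grass u (a • v + b • w) i j = a * grass u v i j + b * grass u w i j := by
  simp only [grass, Pi.add_apply, Pi.smul_apply, smul_eq_mul]; ring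

lemma hexeq_right (a b : F) (u v w : Fin 7 → F) (h1 : HexEq u v) (h2 : HexEq u w) :
    HexEq u (a • v + b • w) := by
  obtain ⟨e1,e2,e3,e4,e5,e6⟩ := h1; obtain ⟨f1,f2,f3,f4,f5,f6⟩ := h2
  exact ⟨by rw [grass_right, grass_right, e1, f1], by rw [grass_right, grass_right, e2, f2],
    by rw [grass_right, grass_right, e3, f3], by rw [grass_right, grass_right, e4, f4],
    by rw [grass_right, grass_right, e5, f5], by rw [grass_right, grass_right, e6, f6]⟩

lemma grass_comb (a b c d : F) (p w : Fin 7 → F) (i j : Fin 7) :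
    grass (a • p + b • w) (c • p + d • w) i j = (a*d - b*c) * grass p w i j := by
  simp only [grass, Pi.add_apply, Pi.smul_apply, smul_eq_mul]; ring

lemma hex_span (p w : Fin 7 → F) (h : HexEq p w) :
    SatisfiesHexEq (Submodule.span F {p, w}) := by
  intro u hu v hv
  obtain ⟨a, b, rfl⟩ := Submodule.mem_span_pair.1 hu
  obtain ⟨c, d, rfl⟩ := Submodule.mem_span_pair.1 hv
  obtain ⟨e1,e2,e3,e4,e5,e6⟩ := h
  exact ⟨by rw [grass_comb, grass_comb, e1], by rw [grass_comb, grass_comb, e2],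
    by rw [grass_comb, grass_comb, e3], by rw [grass_comb, grass_comb, e4],
    by rw [grass_comb, grass_comb, e5], by rw [grass_comb, grass_comb, e6]⟩

lemma indep_pair {p w : Fin 7 → F}
    (h : ∀ a b : F, a • p + b • w = 0 → a = 0 ∧ b = 0) :
    LinearIndependent F ![p, w] := by
  rw [LinearIndependent.pair_iff]
  intro a b hab
  exact h a b hab

lemma span_pair_dim {p w : Fin 7 → F}
    (h : ∀ a b : F, a • p + b • w = 0 → a = 0 ∧ b = 0) :
    Module.finrank F (Submodule.span F ({p, w} : Set (Fin 7 → F))) = 2 := by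
  have hi : LinearIndependent F ![p, w] := indep_pair h
  have : Submodule.span F ({p, w} : Set (Fin 7 → F)) = Submodule.span F (Set.range ![p, w]) := by
    congr 1
    simp only [Matrix.range_cons, Matrix.range_empty, Set.union_empty, Set.union_singleton]
    exact Set.pair_comm p w
  rw [this, finrank_span_eq_card hi]
  simp

lemma span_pair_smul (p u : Fin 7 → F) {c : F} (hc : c ≠ 0) :
    Submodule.span F {p, c • u} = Submodule.span F ({p, u} : Set (Fin 7 → F)) := by
  rw [Submodule.span_insert, Submodule.span_insert,
    Submodule.span_singleton_smul_eq (IsUnit.mk0 c hc)]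

/-- The generic counting lemma. -/
theorem count_main (q : ℕ) [Fintype F] (hq : Fintype.card F = q)
    (p b2 b3 : Fin 7 → F)
    (hQp : quadForm p = 0) (hQ2 : quadForm b2 = 0) (hQ3 : quadForm b3 = 0)
    (hB2 : Bform p b2 = 0) (hB3 : Bform p b3 = 0) (hB23 : Bform b2 b3 = 0)
    (hH2 : HexEq p b2) (hH3 : HexEq p b3)
    (hcomb : ∀ a b c : F, a • p + b • b2 + c • b3 = 0 → a = 0 ∧ b = 0 ∧ c = 0)
    (hspan : ∀ v : Fin 7 → F, HexEq p v → Bform p v = 0 →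
       ∃ x y z : F, v = x • p + y • b2 + z • b3) :
    {W : Submodule F (Fin 7 → F) | AbsoluteLine W ∧ Submodule.span F {p} ≤ W}.ncard = q + 1 := by
  classical
  -- the q+1 lines
  set g : Option F → Submodule F (Fin 7 → F) := fun o =>
    match o with
    | none => Submodule.span F {p, b3}
    | some t => Submodule.span F {p, b2 + t • b3}
    with hg
  -- basic facts
  have hQw : ∀ y z : F, quadForm (y • b2 + z • b3) = 0 := by
    intro y z; rw [quad_comb, hQ2, hQ3, hB23]; ring
  have hBw : ∀ y z : F, Bform p (y • b2 + z • b3) = 0 := by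
    intro y z
    have : Bform p (y • b2 + z • b3) = y * Bform p b2 + z * Bform p b3 := by
      simp only [Bform, Pi.add_apply, Pi.smul_apply, smul_eq_mul]; ring
    rw [this, hB2, hB3]; ring
  have hHw : ∀ y z : F, HexEq p (y • b2 + z • b3) := fun y z => hexeq_right y z p b2 b3 hH2 hH3
  have hpair : ∀ y z : F, (y ≠ 0 ∨ z ≠ 0) →
      ∀ a b : F, a • p + b • (y • b2 + z • b3) = 0 → a = 0 ∧ b = 0 := by
    intro y z hyz a b hab
    have : a • p + (b*y) • b2 + (b*z) • b3 = 0 := by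
      linear_combination (norm := module) hab
    obtain ⟨h1, h2, h3⟩ := hcomb _ _ _ this
    refine ⟨h1, ?_⟩
    rcases hyz with hy | hz
    · exact (mul_eq_zero.1 h2).resolve_right hy
    · exact (mul_eq_zero.1 h3).resolve_right hz
  -- absolute lines in the range
  have habs : ∀ y z : F, (y ≠ 0 ∨ z ≠ 0) →
      AbsoluteLine (Submodule.span F {p, y • b2 + z • b3}) ∧
      Submodule.span F {p} ≤ Submodule.span F {p, y • b2 + z • b3} := by
    intro y z hyz
    refine ⟨⟨⟨span_pair_dim (hpair y z hyz), ?_⟩, hex_span _ _ (hHw y z)⟩, ?_⟩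
    · intro x hx
      obtain ⟨a, b, rfl⟩ := Submodule.mem_span_pair.1 hx
      rw [quad_comb, hQp, hQw, hBw]; ring
    · exact Submodule.span_mono (Set.singleton_subset_iff.2 (Set.mem_insert _ _))
  have hrange : Set.range g = {W : Submodule F (Fin 7 → F) |
      AbsoluteLine W ∧ Submodule.span F {p} ≤ W} := by
    apply Set.Subset.antisymm
    · rintro W ⟨o, rfl⟩
      match o with
      | none =>
        have := habs 0 1 (Or.inr one_ne_zero)
        simpa [hg] using this
      | some t =>
        have := habs 1 t (Or.inl one_ne_zero)
        simpa [hg] using this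
    · rintro W ⟨⟨⟨hdim, hQW⟩, hHW⟩, hPW⟩
      have hpW : p ∈ W := hPW (Submodule.mem_span_singleton_self p)
      -- find v in W not in span {p}
      have hne : ¬ W ≤ Submodule.span F {p} := by
        intro hle
        have h1 : Module.finrank F (Submodule.span F ({p} : Set (Fin 7 → F))) ≤ 1 :=
          finrank_span_le_card {p} |>.trans (by simp)
        have := Submodule.finrank_mono hle
        omega
      obtain ⟨v, hvW, hvp⟩ := SetLike.not_le_iff_exists.1 hne
      have hHpv : HexEq p v := hHW p hpW v hvW
      have hBpv : Bform p v = 0 := by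
        rw [bform_add, hQW _ (Submodule.add_mem W hpW hvW), hQW _ hpW, hQW _ hvW]; ring
      obtain ⟨x, y, z, hv⟩ := hspan v hHpv hBpv
      have hyz : y ≠ 0 ∨ z ≠ 0 := by
        by_contra h
        push_neg at h
        obtain ⟨hy, hz⟩ := h
        apply hvp
        rw [hv, hy, hz]
        simp only [zero_smul, add_zero]
        exact Submodule.smul_mem _ x (Submodule.mem_span_singleton_self p)
      have hwW : y • b2 + z • b3 ∈ W := by
        have : y • b2 + z • b3 = v - x • p := by rw [hv]; module
        rw [this]
        exact Submodule.sub_mem W hvW (Submodule.smul_mem W x hpW)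
      have hWeq : W = Submodule.span F {p, y • b2 + z • b3} := by
        refine (Submodule.eq_of_le_of_finrank_eq ?_ ?_).symm
        · rw [Submodule.span_le]
          rintro u (rfl | rfl)
          · exact hpW
          · exact hwW
        · rw [span_pair_dim (hpair y z hyz), hdim]
      rcases eq_or_ne y 0 with hy | hy
      · refine ⟨none, ?_⟩
        have hz : z ≠ 0 := hyz.resolve_left (by simp [hy])
        have h0 : (0:F) • b2 + z • b3 = z • b3 := by module
        rw [hg, hWeq, hy, h0, span_pair_smul p b3 hz]
      · refine ⟨some (z / y), ?_⟩
        have h0 : y • b2 + z • b3 = y • (b2 + (z/y) • b3) := by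
          rw [smul_add, smul_smul, mul_div_cancel₀ _ hy]
        rw [hg, hWeq, h0, span_pair_smul p _ hy]
  -- injectivity of g
  have hginj : Function.Injective g := by
    intro o1 o2 heq
    have key : ∀ (w1 w2 : Fin 7 → F), Submodule.span F {p, w1} = Submodule.span F {p, w2} →
        ∃ a c : F, w2 = a • p + c • w1 := by
      intro w1 w2 hsp
      have : w2 ∈ Submodule.span F ({p, w1} : Set (Fin 7 → F)) := by
        rw [hsp]
        exact Submodule.subset_span (Set.mem_insert_of_mem _ rfl)
      obtain ⟨a, c, h⟩ := Submodule.mem_span_pair.1 this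
      exact ⟨a, c, h.symm⟩
    match o1, o2 with
    | none, none => rfl
    | none, some t =>
      exfalso
      obtain ⟨a, c, h⟩ := key _ _ heq
      -- h : b2 + t•b3 = a•p + c•b3
      have h0 : a • p + (-1 : F) • b2 + (c - t) • b3 = 0 := by
        linear_combination (norm := module) -h
      obtain ⟨_, h2, _⟩ := hcomb _ _ _ h0
      exact absurd h2 (by norm_num)
    | some t, none =>
      exfalso
      obtain ⟨a, c, h⟩ := key _ _ heq
      -- h : b3 = a•p + c•(b2 + t•b3)
      have h0 : a • p + c • b2 + (c * t - 1) • b3 = 0 := by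
        linear_combination (norm := module) -h
      obtain ⟨_, h2, h3⟩ := hcomb _ _ _ h0
      rw [h2] at h3
      simp at h3
    | some t, some s =>
      congr 1
      obtain ⟨a, c, h⟩ := key _ _ heq
      -- h : b2 + s•b3 = a•p + c•(b2 + t•b3)
      have h0 : a • p + (c-1) • b2 + (c*t - s) • b3 = 0 := by
        linear_combination (norm := module) -h
      obtain ⟨h1, h2, h3⟩ := hcomb _ _ _ h0
      have : t = s := by linear_combination h3 - t * h2
      exact this
  rw [← hrange]
  rw [← Set.image_univ, Set.ncard_image_of_injective _ hginj]
  rw [Set.ncard_univ, Nat.card_eq_fintype_card, Fintype.card_option, hq]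


lemma case_0 (q : ℕ) [Fintype F] (hq : Fintype.card F = q) (p : Fin 7 → F)
    (hp1 : p 0 = 1) (hQp : quadForm p = 0) :
    {W : Submodule F (Fin 7 → F) | AbsoluteLine W ∧ Submodule.span F {p} ≤ W}.ncard = q + 1 := by
  have hQ : p 0 * p 4 + p 1 * p 5 + p 2 * p 6 - p 3 ^ 2 = 0 := hQp
  have hdep : p 4 = p 3 ^ 2 - p 2*p 6 - p 1*p 5 := by linear_combination hQ - p 4 * hp1
  refine count_main q hq p (![0, p 6 ^ 2, -p 5*p 6 - p 3, -p 6, -p 3*p 6 - p 1, (1), 0]) (![0, -p 5*p 6 + p 3, p 5 ^ 2, p 5, p 3*p 5 - p 2, 0, (1)]) hQp ?_ ?_ ?_ ?_ ?_ ?_ ?_ ?_ ?_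
  · simp only [quadForm, v7_0, v7_1, v7_2, v7_3, v7_4, v7_5, v7_6]
    linear_combination (0:F) * hp1
  · simp only [quadForm, v7_0, v7_1, v7_2, v7_3, v7_4, v7_5, v7_6]
    linear_combination (0:F) * hp1
  · simp only [Bform, v7_0, v7_1, v7_2, v7_3, v7_4, v7_5, v7_6]
    linear_combination (-p 3*p 6 - p 1) * hp1
  · simp only [Bform, v7_0, v7_1, v7_2, v7_3, v7_4, v7_5, v7_6]
    linear_combination (p 3*p 5 - p 2) * hp1
  · simp only [Bform, v7_0, v7_1, v7_2, v7_3, v7_4, v7_5, v7_6]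
    linear_combination (0:F) * hp1
  · refine ⟨?_, ?_, ?_, ?_, ?_, ?_⟩ <;>
      simp only [grass, v7_0, v7_1, v7_2, v7_3, v7_4, v7_5, v7_6]
    · linear_combination -p 6 * hdep
    · linear_combination -hdep
    · linear_combination (p 5*p 6 + p 3) * hp1
    · linear_combination -p 6 * hp1
    · linear_combination p 6 ^ 2 * hp1
    · linear_combination (0:F) * hp1
  · refine ⟨?_, ?_, ?_, ?_, ?_, ?_⟩ <;>
      simp only [grass, v7_0, v7_1, v7_2, v7_3, v7_4, v7_5, v7_6]
    · linear_combination p 5 * hdep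
    · linear_combination (0:F) * hp1
    · linear_combination -p 5 ^ 2 * hp1
    · linear_combination p 5 * hp1
    · linear_combination (-p 5*p 6 + p 3) * hp1
    · linear_combination hdep
  · intro a b c habc
    have h1 := congrFun habc 0
    have h2 := congrFun habc 5
    have h3 := congrFun habc 6
    simp only [Pi.add_apply, Pi.smul_apply, smul_eq_mul, Pi.zero_apply,
      v7_0, v7_1, v7_2, v7_3, v7_4, v7_5, v7_6] at h1 h2 h3
    have ha : a = 0 := by linear_combination h1 - a * hp1
    have hb : b = 0 := by linear_combination h2 - p 5 * ha
    have hc : c = 0 := by linear_combination h3 - p 6 * ha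
    exact ⟨ha, hb, hc⟩
  · intro v hvHex hvB
    obtain ⟨he1, he2, he3, he4, he5, he6⟩ := hvHex
    simp only [grass] at he1 he2 he3 he4 he5 he6
    simp only [Bform] at hvB
    have hs3 : v 3 = -p 6*v 5 + p 5*v 6 + p 3*v 0 := by linear_combination he4 - v 3 * hp1
    have hs2 : v 2 = -p 5*p 6*v 5 + p 5 ^ 2*v 6 - p 3*v 5 + p 3*p 5*v 0 + p 2*v 0 := by linear_combination -he3 - v 2 * hp1 + p 5 * hs3
    have hs1 : v 1 = p 6 ^ 2*v 5 - p 5*p 6*v 6 + p 3*v 6 - p 3*p 6*v 0 + p 1*v 0 := by linear_combination he5 - v 1 * hp1 - p 6 * hs3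
    have hs4 : v 4 = -p 3*p 6*v 5 + p 3*p 5*v 6 + p 3 ^ 2*v 0 - p 2*v 6 - p 1*v 5 := by linear_combination hvB - v 4 * hp1 - v 0 * hdep + (2)*p 3 * hs3 - p 6 * hs2 - p 5 * hs1
    refine ⟨v 0, v 5 - p 5 * v 0, v 6 - p 6 * v 0, ?_⟩
    funext j
    fin_cases j <;>
      simp only [Pi.add_apply, Pi.smul_apply, smul_eq_mul, fm7_0, fm7_1, fm7_2,
        fm7_3, fm7_4, fm7_5, fm7_6, v7_0, v7_1, v7_2, v7_3, v7_4, v7_5, v7_6]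
    · linear_combination -v 0 * hp1
    · linear_combination hs1
    · linear_combination hs2
    · linear_combination hs3
    · linear_combination -v 0 * hdep + hs4
    · linear_combination (0:F) * hp1
    · linear_combination (0:F) * hp1

lemma case_1 (q : ℕ) [Fintype F] (hq : Fintype.card F = q) (p : Fin 7 → F)
    (hp1 : p 1 = 1) (hQp : quadForm p = 0) :
    {W : Submodule F (Fin 7 → F) | AbsoluteLine W ∧ Submodule.span F {p} ≤ W}.ncard = q + 1 := by
  have hQ : p 0 * p 4 + p 1 * p 5 + p 2 * p 6 - p 3 ^ 2 = 0 := hQp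
  have hdep : p 5 = p 3 ^ 2 - p 2*p 6 - p 0*p 4 := by linear_combination hQ - p 5 * hp1
  refine count_main q hq p (![-p 4*p 6 - p 3, 0, p 4 ^ 2, -p 4, 0, -p 3*p 4 - p 2, (1)]) (![p 6 ^ 2, 0, -p 4*p 6 + p 3, p 6, (1), p 3*p 6 - p 0, 0]) hQp ?_ ?_ ?_ ?_ ?_ ?_ ?_ ?_ ?_
  · simp only [quadForm, v7_0, v7_1, v7_2, v7_3, v7_4, v7_5, v7_6]
    linear_combination (0:F) * hp1
  · simp only [quadForm, v7_0, v7_1, v7_2, v7_3, v7_4, v7_5, v7_6]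
    linear_combination (0:F) * hp1
  · simp only [Bform, v7_0, v7_1, v7_2, v7_3, v7_4, v7_5, v7_6]
    linear_combination (-p 3*p 4 - p 2) * hp1
  · simp only [Bform, v7_0, v7_1, v7_2, v7_3, v7_4, v7_5, v7_6]
    linear_combination (p 3*p 6 - p 0) * hp1
  · simp only [Bform, v7_0, v7_1, v7_2, v7_3, v7_4, v7_5, v7_6]
    linear_combination (0:F) * hp1
  · refine ⟨?_, ?_, ?_, ?_, ?_, ?_⟩ <;>
      simp only [grass, v7_0, v7_1, v7_2, v7_3, v7_4, v7_5, v7_6]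
    · linear_combination p 4 ^ 2 * hp1
    · linear_combination (0:F) * hp1
    · linear_combination -p 4 * hdep
    · linear_combination -hdep
    · linear_combination (p 4*p 6 + p 3) * hp1
    · linear_combination -p 4 * hp1
  · refine ⟨?_, ?_, ?_, ?_, ?_, ?_⟩ <;>
      simp only [grass, v7_0, v7_1, v7_2, v7_3, v7_4, v7_5, v7_6]
    · linear_combination (-p 4*p 6 + p 3) * hp1
    · linear_combination hdep
    · linear_combination p 6 * hdep
    · linear_combination (0:F) * hp1
    · linear_combination -p 6 ^ 2 * hp1
    · linear_combination p 6 * hp1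
  · intro a b c habc
    have h1 := congrFun habc 1
    have h2 := congrFun habc 6
    have h3 := congrFun habc 4
    simp only [Pi.add_apply, Pi.smul_apply, smul_eq_mul, Pi.zero_apply,
      v7_0, v7_1, v7_2, v7_3, v7_4, v7_5, v7_6] at h1 h2 h3
    have ha : a = 0 := by linear_combination h1 - a * hp1
    have hb : b = 0 := by linear_combination h2 - p 6 * ha
    have hc : c = 0 := by linear_combination h3 - p 4 * ha
    exact ⟨ha, hb, hc⟩
  · intro v hvHex hvB
    obtain ⟨he1, he2, he3, he4, he5, he6⟩ := hvHex
    simp only [grass] at he1 he2 he3 he4 he5 he6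
    simp only [Bform] at hvB
    have hs3 : v 3 = p 6*v 4 - p 4*v 6 + p 3*v 1 := by linear_combination he6 - v 3 * hp1
    have hs2 : v 2 = -p 4*p 6*v 4 + p 4 ^ 2*v 6 + p 3*v 4 - p 3*p 4*v 1 + p 2*v 1 := by linear_combination he1 - v 2 * hp1 - p 4 * hs3
    have hs0 : v 0 = p 6 ^ 2*v 4 - p 4*p 6*v 6 - p 3*v 6 + p 3*p 6*v 1 + p 0*v 1 := by linear_combination -he5 - v 0 * hp1 + p 6 * hs3
    have hs5 : v 5 = p 3*p 6*v 4 - p 3*p 4*v 6 + p 3 ^ 2*v 1 - p 2*v 6 - p 0*v 4 := by linear_combination hvB - v 5 * hp1 - v 1 * hdep + (2)*p 3 * hs3 - p 6 * hs2 - p 4 * hs0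
    refine ⟨v 1, v 6 - p 6 * v 1, v 4 - p 4 * v 1, ?_⟩
    funext j
    fin_cases j <;>
      simp only [Pi.add_apply, Pi.smul_apply, smul_eq_mul, fm7_0, fm7_1, fm7_2,
        fm7_3, fm7_4, fm7_5, fm7_6, v7_0, v7_1, v7_2, v7_3, v7_4, v7_5, v7_6]
    · linear_combination hs0
    · linear_combination -v 1 * hp1
    · linear_combination hs2
    · linear_combination hs3
    · linear_combination (0:F) * hp1
    · linear_combination -v 1 * hdep + hs5
    · linear_combination (0:F) * hp1

lemma case_2 (q : ℕ) [Fintype F] (hq : Fintype.card F = q) (p : Fin 7 → F)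
    (hp1 : p 2 = 1) (hQp : quadForm p = 0) :
    {W : Submodule F (Fin 7 → F) | AbsoluteLine W ∧ Submodule.span F {p} ≤ W}.ncard = q + 1 := by
  have hQ : p 0 * p 4 + p 1 * p 5 + p 2 * p 6 - p 3 ^ 2 = 0 := hQp
  have hdep : p 6 = p 3 ^ 2 - p 1*p 5 - p 0*p 4 := by linear_combination hQ - p 6 * hp1
  refine count_main q hq p (![p 5 ^ 2, -p 4*p 5 - p 3, 0, -p 5, (1), 0, -p 3*p 5 - p 0]) (![-p 4*p 5 + p 3, p 4 ^ 2, 0, p 4, 0, (1), p 3*p 4 - p 1]) hQp ?_ ?_ ?_ ?_ ?_ ?_ ?_ ?_ ?_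
  · simp only [quadForm, v7_0, v7_1, v7_2, v7_3, v7_4, v7_5, v7_6]
    linear_combination (0:F) * hp1
  · simp only [quadForm, v7_0, v7_1, v7_2, v7_3, v7_4, v7_5, v7_6]
    linear_combination (0:F) * hp1
  · simp only [Bform, v7_0, v7_1, v7_2, v7_3, v7_4, v7_5, v7_6]
    linear_combination (-p 3*p 5 - p 0) * hp1
  · simp only [Bform, v7_0, v7_1, v7_2, v7_3, v7_4, v7_5, v7_6]
    linear_combination (p 3*p 4 - p 1) * hp1
  · simp only [Bform, v7_0, v7_1, v7_2, v7_3, v7_4, v7_5, v7_6]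
    linear_combination (0:F) * hp1
  · refine ⟨?_, ?_, ?_, ?_, ?_, ?_⟩ <;>
      simp only [grass, v7_0, v7_1, v7_2, v7_3, v7_4, v7_5, v7_6]
    · linear_combination (p 4*p 5 + p 3) * hp1
    · linear_combination -p 5 * hp1
    · linear_combination p 5 ^ 2 * hp1
    · linear_combination (0:F) * hp1
    · linear_combination -p 5 * hdep
    · linear_combination -hdep
  · refine ⟨?_, ?_, ?_, ?_, ?_, ?_⟩ <;>
      simp only [grass, v7_0, v7_1, v7_2, v7_3, v7_4, v7_5, v7_6]
    · linear_combination -p 4 ^ 2 * hp1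
    · linear_combination p 4 * hp1
    · linear_combination (-p 4*p 5 + p 3) * hp1
    · linear_combination hdep
    · linear_combination p 4 * hdep
    · linear_combination (0:F) * hp1
  · intro a b c habc
    have h1 := congrFun habc 2
    have h2 := congrFun habc 4
    have h3 := congrFun habc 5
    simp only [Pi.add_apply, Pi.smul_apply, smul_eq_mul, Pi.zero_apply,
      v7_0, v7_1, v7_2, v7_3, v7_4, v7_5, v7_6] at h1 h2 h3
    have ha : a = 0 := by linear_combination h1 - a * hp1
    have hb : b = 0 := by linear_combination h2 - p 4 * ha
    have hc : c = 0 := by linear_combination h3 - p 5 * ha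
    exact ⟨ha, hb, hc⟩
  · intro v hvHex hvB
    obtain ⟨he1, he2, he3, he4, he5, he6⟩ := hvHex
    simp only [grass] at he1 he2 he3 he4 he5 he6
    simp only [Bform] at hvB
    have hs3 : v 3 = -p 5*v 4 + p 4*v 5 + p 3*v 2 := by linear_combination he2 - v 3 * hp1
    have hs1 : v 1 = -p 4*p 5*v 4 + p 4 ^ 2*v 5 - p 3*v 4 + p 3*p 4*v 2 + p 1*v 2 := by linear_combination -he1 - v 1 * hp1 + p 4 * hs3
    have hs0 : v 0 = p 5 ^ 2*v 4 - p 4*p 5*v 5 + p 3*v 5 - p 3*p 5*v 2 + p 0*v 2 := by linear_combination he3 - v 0 * hp1 - p 5 * hs3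
    have hs6 : v 6 = -p 3*p 5*v 4 + p 3*p 4*v 5 + p 3 ^ 2*v 2 - p 1*v 5 - p 0*v 4 := by linear_combination hvB - v 6 * hp1 - v 2 * hdep + (2)*p 3 * hs3 - p 5 * hs1 - p 4 * hs0
    refine ⟨v 2, v 4 - p 4 * v 2, v 5 - p 5 * v 2, ?_⟩
    funext j
    fin_cases j <;>
      simp only [Pi.add_apply, Pi.smul_apply, smul_eq_mul, fm7_0, fm7_1, fm7_2,
        fm7_3, fm7_4, fm7_5, fm7_6, v7_0, v7_1, v7_2, v7_3, v7_4, v7_5, v7_6]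
    · linear_combination hs0
    · linear_combination hs1
    · linear_combination -v 2 * hp1
    · linear_combination hs3
    · linear_combination (0:F) * hp1
    · linear_combination (0:F) * hp1
    · linear_combination -v 2 * hdep + hs6

lemma case_4 (q : ℕ) [Fintype F] (hq : Fintype.card F = q) (p : Fin 7 → F)
    (hp1 : p 4 = 1) (hQp : quadForm p = 0) :
    {W : Submodule F (Fin 7 → F) | AbsoluteLine W ∧ Submodule.span F {p} ≤ W}.ncard = q + 1 := by
  have hQ : p 0 * p 4 + p 1 * p 5 + p 2 * p 6 - p 3 ^ 2 = 0 := hQp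
  have hdep : p 0 = p 3 ^ 2 - p 2*p 6 - p 1*p 5 := by linear_combination hQ - p 0 * hp1
  refine count_main q hq p (![-p 5 + p 2*p 3, (1), 0, p 2, 0, p 2 ^ 2, p 3 - p 1*p 2]) (![-p 6 - p 1*p 3, 0, (1), -p 1, 0, -p 3 - p 1*p 2, p 1 ^ 2]) hQp ?_ ?_ ?_ ?_ ?_ ?_ ?_ ?_ ?_
  · simp only [quadForm, v7_0, v7_1, v7_2, v7_3, v7_4, v7_5, v7_6]
    linear_combination (0:F) * hp1
  · simp only [quadForm, v7_0, v7_1, v7_2, v7_3, v7_4, v7_5, v7_6]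
    linear_combination (0:F) * hp1
  · simp only [Bform, v7_0, v7_1, v7_2, v7_3, v7_4, v7_5, v7_6]
    linear_combination (-p 5 + p 2*p 3) * hp1
  · simp only [Bform, v7_0, v7_1, v7_2, v7_3, v7_4, v7_5, v7_6]
    linear_combination (-p 6 - p 1*p 3) * hp1
  · simp only [Bform, v7_0, v7_1, v7_2, v7_3, v7_4, v7_5, v7_6]
    linear_combination (0:F) * hp1
  · refine ⟨?_, ?_, ?_, ?_, ?_, ?_⟩ <;>
      simp only [grass, v7_0, v7_1, v7_2, v7_3, v7_4, v7_5, v7_6]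
    · linear_combination p 2 * hp1
    · linear_combination -p 2 ^ 2 * hp1
    · linear_combination (0:F) * hp1
    · linear_combination p 2 * hdep
    · linear_combination hdep
    · linear_combination (p 3 - p 1*p 2) * hp1
  · refine ⟨?_, ?_, ?_, ?_, ?_, ?_⟩ <;>
      simp only [grass, v7_0, v7_1, v7_2, v7_3, v7_4, v7_5, v7_6]
    · linear_combination -p 1 * hp1
    · linear_combination (p 3 + p 1*p 2) * hp1
    · linear_combination -hdep
    · linear_combination -p 1 * hdep
    · linear_combination (0:F) * hp1
    · linear_combination p 1 ^ 2 * hp1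
  · intro a b c habc
    have h1 := congrFun habc 4
    have h2 := congrFun habc 1
    have h3 := congrFun habc 2
    simp only [Pi.add_apply, Pi.smul_apply, smul_eq_mul, Pi.zero_apply,
      v7_0, v7_1, v7_2, v7_3, v7_4, v7_5, v7_6] at h1 h2 h3
    have ha : a = 0 := by linear_combination h1 - a * hp1
    have hb : b = 0 := by linear_combination h2 - p 1 * ha
    have hc : c = 0 := by linear_combination h3 - p 2 * ha
    exact ⟨ha, hb, hc⟩
  · intro v hvHex hvB
    obtain ⟨he1, he2, he3, he4, he5, he6⟩ := hvHex
    simp only [grass] at he1 he2 he3 he4 he5 he6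
    simp only [Bform] at hvB
    have hs3 : v 3 = p 3*v 4 + p 2*v 1 - p 1*v 2 := by linear_combination he1 - v 3 * hp1
    have hs5 : v 5 = p 5*v 4 - p 3*v 2 + p 2*p 3*v 4 + p 2 ^ 2*v 1 - p 1*p 2*v 2 := by linear_combination -he2 - v 5 * hp1 + p 2 * hs3
    have hs6 : v 6 = p 6*v 4 + p 3*v 1 - p 1*p 3*v 4 - p 1*p 2*v 1 + p 1 ^ 2*v 2 := by linear_combination he6 - v 6 * hp1 - p 1 * hs3
    have hs0 : v 0 = -p 6*v 2 - p 5*v 1 + p 3 ^ 2*v 4 + p 2*p 3*v 1 - p 1*p 3*v 2 := by linear_combination hvB - v 0 * hp1 - v 4 * hdep + (2)*p 3 * hs3 - p 1 * hs5 - p 2 * hs6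
    refine ⟨v 4, v 1 - p 1 * v 4, v 2 - p 2 * v 4, ?_⟩
    funext j
    fin_cases j <;>
      simp only [Pi.add_apply, Pi.smul_apply, smul_eq_mul, fm7_0, fm7_1, fm7_2,
        fm7_3, fm7_4, fm7_5, fm7_6, v7_0, v7_1, v7_2, v7_3, v7_4, v7_5, v7_6]
    · linear_combination -v 4 * hdep + hs0
    · linear_combination (0:F) * hp1
    · linear_combination (0:F) * hp1
    · linear_combination hs3
    · linear_combination -v 4 * hp1
    · linear_combination hs5
    · linear_combination hs6

lemma case_5 (q : ℕ) [Fintype F] (hq : Fintype.card F = q) (p : Fin 7 → F)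
    (hp1 : p 5 = 1) (hQp : quadForm p = 0) :
    {W : Submodule F (Fin 7 → F) | AbsoluteLine W ∧ Submodule.span F {p} ≤ W}.ncard = q + 1 := by
  have hQ : p 0 * p 4 + p 1 * p 5 + p 2 * p 6 - p 3 ^ 2 = 0 := hQp
  have hdep : p 1 = p 3 ^ 2 - p 2*p 6 - p 0*p 4 := by linear_combination hQ - p 1 * hp1
  refine count_main q hq p (![0, -p 6 + p 0*p 3, (1), p 0, p 3 - p 0*p 2, 0, p 0 ^ 2]) (![(1), -p 4 - p 2*p 3, 0, -p 2, p 2 ^ 2, 0, -p 3 - p 0*p 2]) hQp ?_ ?_ ?_ ?_ ?_ ?_ ?_ ?_ ?_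
  · simp only [quadForm, v7_0, v7_1, v7_2, v7_3, v7_4, v7_5, v7_6]
    linear_combination (0:F) * hp1
  · simp only [quadForm, v7_0, v7_1, v7_2, v7_3, v7_4, v7_5, v7_6]
    linear_combination (0:F) * hp1
  · simp only [Bform, v7_0, v7_1, v7_2, v7_3, v7_4, v7_5, v7_6]
    linear_combination (-p 6 + p 0*p 3) * hp1
  · simp only [Bform, v7_0, v7_1, v7_2, v7_3, v7_4, v7_5, v7_6]
    linear_combination (-p 4 - p 2*p 3) * hp1
  · simp only [Bform, v7_0, v7_1, v7_2, v7_3, v7_4, v7_5, v7_6]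
    linear_combination (0:F) * hp1
  · refine ⟨?_, ?_, ?_, ?_, ?_, ?_⟩ <;>
      simp only [grass, v7_0, v7_1, v7_2, v7_3, v7_4, v7_5, v7_6]
    · linear_combination hdep
    · linear_combination (p 3 - p 0*p 2) * hp1
    · linear_combination p 0 * hp1
    · linear_combination -p 0 ^ 2 * hp1
    · linear_combination (0:F) * hp1
    · linear_combination p 0 * hdep
  · refine ⟨?_, ?_, ?_, ?_, ?_, ?_⟩ <;>
      simp only [grass, v7_0, v7_1, v7_2, v7_3, v7_4, v7_5, v7_6]
    · linear_combination (0:F) * hp1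
    · linear_combination p 2 ^ 2 * hp1
    · linear_combination -p 2 * hp1
    · linear_combination (p 3 + p 0*p 2) * hp1
    · linear_combination -hdep
    · linear_combination -p 2 * hdep
  · intro a b c habc
    have h1 := congrFun habc 5
    have h2 := congrFun habc 2
    have h3 := congrFun habc 0
    simp only [Pi.add_apply, Pi.smul_apply, smul_eq_mul, Pi.zero_apply,
      v7_0, v7_1, v7_2, v7_3, v7_4, v7_5, v7_6] at h1 h2 h3
    have ha : a = 0 := by linear_combination h1 - a * hp1
    have hb : b = 0 := by linear_combination h2 - p 2 * ha
    have hc : c = 0 := by linear_combination h3 - p 0 * ha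
    exact ⟨ha, hb, hc⟩
  · intro v hvHex hvB
    obtain ⟨he1, he2, he3, he4, he5, he6⟩ := hvHex
    simp only [grass] at he1 he2 he3 he4 he5 he6
    simp only [Bform] at hvB
    have hs3 : v 3 = p 3*v 5 - p 2*v 0 + p 0*v 2 := by linear_combination he3 - v 3 * hp1
    have hs4 : v 4 = p 4*v 5 + p 3*v 2 - p 2*p 3*v 5 + p 2 ^ 2*v 0 - p 0*p 2*v 2 := by linear_combination he2 - v 4 * hp1 - p 2 * hs3
    have hs6 : v 6 = p 6*v 5 - p 3*v 0 + p 0*p 3*v 5 - p 0*p 2*v 0 + p 0 ^ 2*v 2 := by linear_combination -he4 - v 6 * hp1 + p 0 * hs3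
    have hs1 : v 1 = -p 6*v 2 - p 4*v 0 + p 3 ^ 2*v 5 - p 2*p 3*v 0 + p 0*p 3*v 2 := by linear_combination hvB - v 1 * hp1 - v 5 * hdep + (2)*p 3 * hs3 - p 0 * hs4 - p 2 * hs6
    refine ⟨v 5, v 2 - p 2 * v 5, v 0 - p 0 * v 5, ?_⟩
    funext j
    fin_cases j <;>
      simp only [Pi.add_apply, Pi.smul_apply, smul_eq_mul, fm7_0, fm7_1, fm7_2,
        fm7_3, fm7_4, fm7_5, fm7_6, v7_0, v7_1, v7_2, v7_3, v7_4, v7_5, v7_6]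
    · linear_combination (0:F) * hp1
    · linear_combination -v 5 * hdep + hs1
    · linear_combination (0:F) * hp1
    · linear_combination hs3
    · linear_combination hs4
    · linear_combination -v 5 * hp1
    · linear_combination hs6

lemma case_6 (q : ℕ) [Fintype F] (hq : Fintype.card F = q) (p : Fin 7 → F)
    (hp1 : p 6 = 1) (hQp : quadForm p = 0) :
    {W : Submodule F (Fin 7 → F) | AbsoluteLine W ∧ Submodule.span F {p} ≤ W}.ncard = q + 1 := by
  have hQ : p 0 * p 4 + p 1 * p 5 + p 2 * p 6 - p 3 ^ 2 = 0 := hQp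
  have hdep : p 2 = p 3 ^ 2 - p 1*p 5 - p 0*p 4 := by linear_combination hQ - p 2 * hp1
  refine count_main q hq p (![(1), 0, -p 4 + p 1*p 3, p 1, p 1 ^ 2, p 3 - p 0*p 1, 0]) (![0, (1), -p 5 - p 0*p 3, -p 0, -p 3 - p 0*p 1, p 0 ^ 2, 0]) hQp ?_ ?_ ?_ ?_ ?_ ?_ ?_ ?_ ?_
  · simp only [quadForm, v7_0, v7_1, v7_2, v7_3, v7_4, v7_5, v7_6]
    linear_combination (0:F) * hp1
  · simp only [quadForm, v7_0, v7_1, v7_2, v7_3, v7_4, v7_5, v7_6]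
    linear_combination (0:F) * hp1
  · simp only [Bform, v7_0, v7_1, v7_2, v7_3, v7_4, v7_5, v7_6]
    linear_combination (-p 4 + p 1*p 3) * hp1
  · simp only [Bform, v7_0, v7_1, v7_2, v7_3, v7_4, v7_5, v7_6]
    linear_combination (-p 5 - p 0*p 3) * hp1
  · simp only [Bform, v7_0, v7_1, v7_2, v7_3, v7_4, v7_5, v7_6]
    linear_combination (0:F) * hp1
  · refine ⟨?_, ?_, ?_, ?_, ?_, ?_⟩ <;>
      simp only [grass, v7_0, v7_1, v7_2, v7_3, v7_4, v7_5, v7_6]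
    · linear_combination (0:F) * hp1
    · linear_combination p 1 * hdep
    · linear_combination hdep
    · linear_combination (p 3 - p 0*p 1) * hp1
    · linear_combination p 1 * hp1
    · linear_combination -p 1 ^ 2 * hp1
  · refine ⟨?_, ?_, ?_, ?_, ?_, ?_⟩ <;>
      simp only [grass, v7_0, v7_1, v7_2, v7_3, v7_4, v7_5, v7_6]
    · linear_combination -hdep
    · linear_combination -p 0 * hdep
    · linear_combination (0:F) * hp1
    · linear_combination p 0 ^ 2 * hp1
    · linear_combination -p 0 * hp1
    · linear_combination (p 3 + p 0*p 1) * hp1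
  · intro a b c habc
    have h1 := congrFun habc 6
    have h2 := congrFun habc 0
    have h3 := congrFun habc 1
    simp only [Pi.add_apply, Pi.smul_apply, smul_eq_mul, Pi.zero_apply,
      v7_0, v7_1, v7_2, v7_3, v7_4, v7_5, v7_6] at h1 h2 h3
    have ha : a = 0 := by linear_combination h1 - a * hp1
    have hb : b = 0 := by linear_combination h2 - p 0 * ha
    have hc : c = 0 := by linear_combination h3 - p 1 * ha
    exact ⟨ha, hb, hc⟩
  · intro v hvHex hvB
    obtain ⟨he1, he2, he3, he4, he5, he6⟩ := hvHex
    simp only [grass] at he1 he2 he3 he4 he5 he6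
    simp only [Bform] at hvB
    have hs3 : v 3 = p 3*v 6 + p 1*v 0 - p 0*v 1 := by linear_combination he5 - v 3 * hp1
    have hs5 : v 5 = p 5*v 6 + p 3*v 0 - p 0*p 3*v 6 - p 0*p 1*v 0 + p 0 ^ 2*v 1 := by linear_combination he4 - v 5 * hp1 - p 0 * hs3
    have hs4 : v 4 = p 4*v 6 - p 3*v 1 + p 1*p 3*v 6 + p 1 ^ 2*v 0 - p 0*p 1*v 1 := by linear_combination -he6 - v 4 * hp1 + p 1 * hs3
    have hs2 : v 2 = -p 5*v 1 - p 4*v 0 + p 3 ^ 2*v 6 + p 1*p 3*v 0 - p 0*p 3*v 1 := by linear_combination hvB - v 2 * hp1 - v 6 * hdep + (2)*p 3 * hs3 - p 1 * hs5 - p 0 * hs4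
    refine ⟨v 6, v 0 - p 0 * v 6, v 1 - p 1 * v 6, ?_⟩
    funext j
    fin_cases j <;>
      simp only [Pi.add_apply, Pi.smul_apply, smul_eq_mul, fm7_0, fm7_1, fm7_2,
        fm7_3, fm7_4, fm7_5, fm7_6, v7_0, v7_1, v7_2, v7_3, v7_4, v7_5, v7_6]
    · linear_combination (0:F) * hp1
    · linear_combination (0:F) * hp1
    · linear_combination -v 6 * hdep + hs2
    · linear_combination hs3
    · linear_combination hs4
    · linear_combination hs5
    · linear_combination -v 6 * hp1
/-- Over a finite field with `q` elements, every singular point of the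
quadratic form `Q(x) = x₀x₄ + x₁x₅ + x₂x₆ − x₃²` on `F⁷` is contained in exactly `q+1`
absolute lines. -/
theorem stmt_7 (q : ℕ) (F : Type) [Field F] [Fintype F] (hq : Fintype.card F = q)
    (P : Submodule F (Fin 7 → F)) (hP : SingularPoint P) :
    {W : Submodule F (Fin 7 → F) | AbsoluteLine W ∧ P ≤ W}.ncard = q + 1 := by
  obtain ⟨hdim, hQ0⟩ := hP
  obtain ⟨u, hu0, hPu⟩ : ∃ u : Fin 7 → F, u ≠ 0 ∧ P = Submodule.span F {u} := by
    obtain ⟨v, hv0, hv⟩ := finrank_eq_one_iff'.mp hdim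
    refine ⟨(v : Fin 7 → F), by simpa using hv0, ?_⟩
    apply le_antisymm
    · intro x hx
      obtain ⟨c, hc⟩ := hv ⟨x, hx⟩
      have hcx : c • (v : Fin 7 → F) = x := by
        have := congrArg (Subtype.val) hc
        simpa using this
      rw [← hcx]
      exact Submodule.smul_mem _ _ (Submodule.subset_span rfl)
    · rw [Submodule.span_le, Set.singleton_subset_iff]
      exact v.2
  have hQu : quadForm u = 0 := hQ0 u (hPu ▸ Submodule.mem_span_singleton_self u)
  have hex : ∃ i : Fin 7, i ≠ 3 ∧ u i ≠ 0 := by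
    by_contra h
    push_neg at h
    have h3 : u 3 = 0 := by
      have h2 : (u 3)^2 = 0 := by
        have : quadForm u = -(u 3)^2 := by
          simp only [quadForm, h 0 (by decide), h 1 (by decide), h 2 (by decide)]
          ring
        rw [hQu] at this
        linear_combination this
      exact pow_eq_zero_iff (by norm_num) |>.mp h2
    apply hu0
    funext i
    fin_cases i
    · exact h 0 (by decide)
    · exact h 1 (by decide)
    · exact h 2 (by decide)
    · exact h3
    · exact h 4 (by decide)
    · exact h 5 (by decide)
    · exact h 6 (by decide)
  obtain ⟨i, hi3, hui⟩ := hex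
  have hPspan : ∀ (j : Fin 7), u j ≠ 0 → P = Submodule.span F {(u j)⁻¹ • u} := by
    intro j huj
    rw [hPu, Submodule.span_singleton_smul_eq (IsUnit.mk0 _ (inv_ne_zero huj)) u]
  have hQp : ∀ (j : Fin 7), quadForm ((u j)⁻¹ • u) = 0 := by
    intro j
    have h : quadForm ((u j)⁻¹ • u) = ((u j)⁻¹)^2 * quadForm u := by
      simp only [quadForm, Pi.smul_apply, smul_eq_mul]; ring
    rw [h, hQu, mul_zero]
  have hp1 : ∀ (j : Fin 7), u j ≠ 0 → ((u j)⁻¹ • u) j = 1 := by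
    intro j huj
    simp [inv_mul_cancel₀ huj]
  fin_cases i
  · rw [hPspan 0 hui]; exact case_0 q hq _ (hp1 0 hui) (hQp 0)
  · rw [hPspan 1 hui]; exact case_1 q hq _ (hp1 1 hui) (hQp 1)
  · rw [hPspan 2 hui]; exact case_2 q hq _ (hp1 2 hui) (hQp 2)
  · exact absurd rfl hi3
  · rw [hPspan 4 hui]; exact case_4 q hq _ (hp1 4 hui) (hQp 4)
  · rw [hPspan 5 hui]; exact case_5 q hq _ (hp1 5 hui) (hQp 5)
  · rw [hPspan 6 hui]; exact case_6 q hq _ (hp1 6 hui) (hQp 6)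
end

section
/- Let F be a finite field with q elements, V = F⁷ with coordinates indexed 0,…,6 and standard basis e₀,…,e₆, and Q the quadratic form Q(x) = x₀x₄ + x₁x₅ + x₂x₆ − x₃² on V. Let l = span(e₅,e₆) and l' = span(e₁,e₂). Then (i) l and l' are moving lines; (ii) every 2-dimensional subspace W of V with W ∩ l ≠ 0 and W ∩ l' ≠ 0 satisfies the hexagon equations; consequently no moving line intersects both l and l' nontrivially. -/
variable {F : Type} [Field F]

/- ### Auxiliary lemmas -/

lemma span_pair_rank (u v : Fin 7 → F) (h : LinearIndependent F ![u, v]) :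
    Module.finrank F (Submodule.span F {u, v}) = 2 := by
  have h1 : Set.range ![u, v] = {u, v} := by
    simp [Matrix.range_cons, Matrix.range_empty, Set.pair_comm]
  have := finrank_span_eq_card h
  rw [h1] at this
  simpa using this

lemma li_single (i j : Fin 7) (hij : i ≠ j) :
    LinearIndependent F ![(Pi.single i (1 : F) : Fin 7 → F), Pi.single j 1] := by
  rw [LinearIndependent.pair_iff]
  intro s t h
  constructor
  · have := congrFun h i
    simpa [Pi.single_apply, hij.symm] using this
  · have := congrFun h j
    simpa [Pi.single_apply, hij] using this

lemma li_pair (a b c d : F) (hu : ¬ (a = 0 ∧ b = 0)) (hv : ¬ (c = 0 ∧ d = 0)) :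
    LinearIndependent F
      ![a • (Pi.single (5:Fin 7) (1:F) : Fin 7 → F) + b • (Pi.single 6 1 : Fin 7 → F),
        c • (Pi.single (1:Fin 7) (1:F) : Fin 7 → F) + d • (Pi.single 2 1 : Fin 7 → F)] := by
  rw [LinearIndependent.pair_iff]
  intro s t h
  have h5 := congrFun h 5
  have h6 := congrFun h 6
  have h1 := congrFun h 1
  have h2 := congrFun h 2
  simp [Pi.single_apply] at h5 h6 h1 h2
  constructor
  · by_contra hs
    exact hu ⟨by rcases h5 with h|h <;> tauto, by rcases h6 with h|h <;> tauto⟩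
  · by_contra ht
    exact hv ⟨by rcases h1 with h|h <;> tauto, by rcases h2 with h|h <;> tauto⟩

lemma hex_aux (a b c d p r s t : F) :
    HexEq (p • (a • (Pi.single (5:Fin 7) (1:F) : Fin 7 → F) + b • (Pi.single 6 1 : Fin 7 → F))
         + r • (c • (Pi.single (1:Fin 7) (1:F) : Fin 7 → F) + d • (Pi.single 2 1 : Fin 7 → F)))
          (s • (a • (Pi.single (5:Fin 7) (1:F) : Fin 7 → F) + b • (Pi.single 6 1 : Fin 7 → F))
         + t • (c • (Pi.single (1:Fin 7) (1:F) : Fin 7 → F) + d • (Pi.single 2 1 : Fin 7 → F))) := by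
  refine ⟨?_, ?_, ?_, ?_, ?_, ?_⟩ <;> simp [grass, Pi.single_apply] <;> ring

lemma quad56 (a b : F) :
    quadForm (a • (Pi.single (5:Fin 7) (1:F) : Fin 7 → F) + b • (Pi.single 6 1 : Fin 7 → F)) = 0 := by
  simp [quadForm, Pi.single_apply]

lemma quad12 (a b : F) :
    quadForm (a • (Pi.single (1:Fin 7) (1:F) : Fin 7 → F) + b • (Pi.single 2 1 : Fin 7 → F)) = 0 := by
  simp [quadForm, Pi.single_apply]

lemma nothex56 : ¬ HexEq (Pi.single (5:Fin 7) (1:F) : Fin 7 → F) (Pi.single 6 1 : Fin 7 → F) := by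
  intro h
  have := h.2.2.2.1
  simp [grass, Pi.single_apply] at this

lemma nothex12 : ¬ HexEq (Pi.single (1:Fin 7) (1:F) : Fin 7 → F) (Pi.single 2 1 : Fin 7 → F) := by
  intro h
  have := h.1
  simp [grass, Pi.single_apply] at this

lemma moving56 : MovingLine (Submodule.span F {Pi.single (5 : Fin 7) (1 : F), Pi.single 6 1}) := by
  refine ⟨⟨span_pair_rank _ _ (li_single 5 6 (by decide)), ?_⟩, ?_⟩
  · intro x hx
    obtain ⟨a, b, rfl⟩ := Submodule.mem_span_pair.mp hx
    exact quad56 a b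
  · intro h
    exact nothex56 (h _ (Submodule.subset_span (by simp)) _ (Submodule.subset_span (by simp)))

lemma moving12 : MovingLine (Submodule.span F {Pi.single (1 : Fin 7) (1 : F), Pi.single 2 1}) := by
  refine ⟨⟨span_pair_rank _ _ (li_single 1 2 (by decide)), ?_⟩, ?_⟩
  · intro x hx
    obtain ⟨a, b, rfl⟩ := Submodule.mem_span_pair.mp hx
    exact quad12 a b
  · intro h
    exact nothex12 (h _ (Submodule.subset_span (by simp)) _ (Submodule.subset_span (by simp)))

lemma part_ii (W : Submodule F (Fin 7 → F)) (hW2 : Module.finrank F W = 2)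
    (h5 : W ⊓ Submodule.span F {Pi.single (5 : Fin 7) (1 : F), Pi.single 6 1} ≠ ⊥)
    (h1 : W ⊓ Submodule.span F {Pi.single (1 : Fin 7) (1 : F), Pi.single 2 1} ≠ ⊥) :
    SatisfiesHexEq W := by
  obtain ⟨u, hu, hu0⟩ := (Submodule.ne_bot_iff _).mp h5
  obtain ⟨v, hv, hv0⟩ := (Submodule.ne_bot_iff _).mp h1
  obtain ⟨a, b, hab⟩ := Submodule.mem_span_pair.mp hu.2
  obtain ⟨c, d, hcd⟩ := Submodule.mem_span_pair.mp hv.2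
  have hab0 : ¬ (a = 0 ∧ b = 0) := by
    rintro ⟨rfl, rfl⟩
    exact hu0 (by simpa using hab.symm)
  have hcd0 : ¬ (c = 0 ∧ d = 0) := by
    rintro ⟨rfl, rfl⟩
    exact hv0 (by simpa using hcd.symm)
  have hli : LinearIndependent F ![u, v] := by
    have := li_pair a b c d hab0 hcd0
    rwa [hab, hcd] at this
  have hle : Submodule.span F {u, v} ≤ W := by
    rw [Submodule.span_le]
    rintro x (rfl | rfl)
    exacts [hu.1, hv.1]
  have heq : Submodule.span F {u, v} = W :=
    Submodule.eq_of_le_of_finrank_eq hle (by rw [span_pair_rank u v hli, hW2])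
  intro w1 hw1 w2 hw2
  rw [← heq] at hw1 hw2
  obtain ⟨p, r, rfl⟩ := Submodule.mem_span_pair.mp hw1
  obtain ⟨s, t, rfl⟩ := Submodule.mem_span_pair.mp hw2
  rw [← hab, ← hcd]
  exact hex_aux a b c d p r s t

/-- With `e₀,…,e₆` the standard basis of `F⁷`, `l = span(e₅,e₆)` and
`l' = span(e₁,e₂)`: (i) `l` and `l'` are moving lines; (ii) every 2-dimensional subspace
`W` with `W ∩ l ≠ 0` and `W ∩ l' ≠ 0` satisfies the hexagon equations; consequently no
moving line intersects both `l` and `l'` nontrivially. -/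
theorem stmt_10 (q : ℕ) (F : Type) [Field F] [Fintype F] (hq : Fintype.card F = q) :
    MovingLine (Submodule.span F {Pi.single (5 : Fin 7) (1 : F), Pi.single 6 1}) ∧
    MovingLine (Submodule.span F {Pi.single (1 : Fin 7) (1 : F), Pi.single 2 1}) ∧
    (∀ W : Submodule F (Fin 7 → F), Module.finrank F W = 2 →
      W ⊓ Submodule.span F {Pi.single (5 : Fin 7) (1 : F), Pi.single 6 1} ≠ ⊥ →
      W ⊓ Submodule.span F {Pi.single (1 : Fin 7) (1 : F), Pi.single 2 1} ≠ ⊥ →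
      SatisfiesHexEq W) ∧
    ¬ ∃ W : Submodule F (Fin 7 → F), MovingLine W ∧
      W ⊓ Submodule.span F {Pi.single (5 : Fin 7) (1 : F), Pi.single 6 1} ≠ ⊥ ∧
      W ⊓ Submodule.span F {Pi.single (1 : Fin 7) (1 : F), Pi.single 2 1} ≠ ⊥ := by
  refine ⟨moving56, moving12, part_ii, ?_⟩
  rintro ⟨W, hW, h5, h1⟩
  exact hW.2 (part_ii W hW.1.1 h5 h1)
end

section
/- Let F be a finite field with q elements, V = F⁷ with coordinates indexed 0,…,6, and Q the quadratic form Q(x) = x₀x₄ + x₁x₅ + x₂x₆ − x₃² on V. Let (P₀,…,P₅) be an absolute hexagon. Then for each i (indices modulo 6), the 2-dimensional subspace P_i + P_{i+3} spanned by two opposite vertices is not totally singular, i.e., Q does not vanish identically on it. -/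
variable {F : Type} [Field F]

def om (x y : Fin 8 → F) : Fin 8 → F :=
  ![ x 3 * y 0 + y 7 * x 0 - (x 5 * y 6 - x 6 * y 5),
     x 3 * y 1 + y 7 * x 1 - (x 6 * y 4 - x 4 * y 6),
     x 3 * y 2 + y 7 * x 2 - (x 4 * y 5 - x 5 * y 4),
     x 3 * y 3 - (x 0 * y 4 + x 1 * y 5 + x 2 * y 6),
     y 3 * x 4 + x 7 * y 4 - (x 1 * y 2 - x 2 * y 1),
     y 3 * x 5 + x 7 * y 5 - (x 2 * y 0 - x 0 * y 2),
     y 3 * x 6 + x 7 * y 6 - (x 0 * y 1 - x 1 * y 0),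
     x 7 * y 7 - (x 4 * y 0 + x 5 * y 1 + x 6 * y 2) ]

def octOne : Fin 8 → F := ![0,0,0,1,0,0,0,1]
def Noct (z : Fin 8 → F) : F := z 3 * z 7 + z 0 * z 4 + z 1 * z 5 + z 2 * z 6
def Toct (z : Fin 8 → F) : F := z 3 + z 7
def Poct (x y : Fin 8 → F) : F :=
  x 3 * y 7 + x 7 * y 3 + x 0 * y 4 + x 4 * y 0 + x 1 * y 5 + x 5 * y 1 + x 2 * y 6 + x 6 * y 2

theorem om0 (x y : Fin 8 → F) : om x y 0 = x 3 * y 0 + y 7 * x 0 - (x 5 * y 6 - x 6 * y 5) := rfl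
theorem om1 (x y : Fin 8 → F) : om x y 1 = x 3 * y 1 + y 7 * x 1 - (x 6 * y 4 - x 4 * y 6) := rfl
theorem om2 (x y : Fin 8 → F) : om x y 2 = x 3 * y 2 + y 7 * x 2 - (x 4 * y 5 - x 5 * y 4) := rfl
theorem om3 (x y : Fin 8 → F) : om x y 3 = x 3 * y 3 - (x 0 * y 4 + x 1 * y 5 + x 2 * y 6) := rfl
theorem om4 (x y : Fin 8 → F) : om x y 4 = y 3 * x 4 + x 7 * y 4 - (x 1 * y 2 - x 2 * y 1) := rfl
theorem om5 (x y : Fin 8 → F) : om x y 5 = y 3 * x 5 + x 7 * y 5 - (x 2 * y 0 - x 0 * y 2) := rfl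
theorem om6 (x y : Fin 8 → F) : om x y 6 = y 3 * x 6 + x 7 * y 6 - (x 0 * y 1 - x 1 * y 0) := rfl
theorem om7 (x y : Fin 8 → F) : om x y 7 = x 7 * y 7 - (x 4 * y 0 + x 5 * y 1 + x 6 * y 2) := rfl

theorem oe0 : (octOne : Fin 8 → F) 0 = 0 := rfl
theorem oe1 : (octOne : Fin 8 → F) 1 = 0 := rfl
theorem oe2 : (octOne : Fin 8 → F) 2 = 0 := rfl
theorem oe3 : (octOne : Fin 8 → F) 3 = 1 := rfl
theorem oe4 : (octOne : Fin 8 → F) 4 = 0 := rfl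
theorem oe5 : (octOne : Fin 8 → F) 5 = 0 := rfl
theorem oe6 : (octOne : Fin 8 → F) 6 = 0 := rfl
theorem oe7 : (octOne : Fin 8 → F) 7 = 1 := rfl

theorem oct_ext {a b : Fin 8 → F} (h0 : a 0 = b 0) (h1 : a 1 = b 1) (h2 : a 2 = b 2)
    (h3 : a 3 = b 3) (h4 : a 4 = b 4) (h5 : a 5 = b 5) (h6 : a 6 = b 6) (h7 : a 7 = b 7) :
    a = b := by
  funext i; fin_cases i; exacts [h0, h1, h2, h3, h4, h5, h6, h7]

section
variable (x y z : Fin 8 → F) (c : F)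

theorem om_one : om octOne z = z := by
  refine oct_ext ?_ ?_ ?_ ?_ ?_ ?_ ?_ ?_ <;>
    simp only [om0, om1, om2, om3, om4, om5, om6, om7, oe0, oe1, oe2, oe3, oe4, oe5, oe6, oe7] <;>
    ring

theorem om_alt : om x (om x y) = om (om x x) y := by
  refine oct_ext ?_ ?_ ?_ ?_ ?_ ?_ ?_ ?_ <;>
    simp only [om0, om1, om2, om3, om4, om5, om6, om7] <;> ring

theorem om_CH : om x x = Toct x • x - Noct x • octOne := by
  refine oct_ext ?_ ?_ ?_ ?_ ?_ ?_ ?_ ?_ <;>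
    simp only [om0, om1, om2, om3, om4, om5, om6, om7, oe0, oe1, oe2, oe3, oe4, oe5, oe6, oe7,
      Pi.sub_apply, Pi.smul_apply, smul_eq_mul, Noct, Toct] <;> ring

theorem om_I3 : om x y + om y x = Toct x • y + Toct y • x - Poct x y • octOne := by
  refine oct_ext ?_ ?_ ?_ ?_ ?_ ?_ ?_ ?_ <;>
    simp only [om0, om1, om2, om3, om4, om5, om6, om7, oe0, oe1, oe2, oe3, oe4, oe5, oe6, oe7,
      Pi.sub_apply, Pi.add_apply, Pi.smul_apply, smul_eq_mul, Toct, Poct] <;> ring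

theorem om_I1 : om x (om y z) + om y (om x z) = om (om x y + om y x) z := by
  refine oct_ext ?_ ?_ ?_ ?_ ?_ ?_ ?_ ?_ <;>
    simp only [om0, om1, om2, om3, om4, om5, om6, om7, Pi.add_apply] <;> ring

theorem Noct_mul : Noct (om x y) = Noct x * Noct y := by
  simp only [Noct, om0, om1, om2, om3, om4, om5, om6, om7]; ring

theorem om_add_right : om x (y + z) = om x y + om x z := by
  refine oct_ext ?_ ?_ ?_ ?_ ?_ ?_ ?_ ?_ <;>
    simp only [om0, om1, om2, om3, om4, om5, om6, om7, Pi.add_apply] <;> ring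

theorem om_smul_right : om x (c • y) = c • om x y := by
  refine oct_ext ?_ ?_ ?_ ?_ ?_ ?_ ?_ ?_ <;>
    simp only [om0, om1, om2, om3, om4, om5, om6, om7, Pi.smul_apply, smul_eq_mul] <;> ring

theorem om_add_left : om (x + y) z = om x z + om y z := by
  refine oct_ext ?_ ?_ ?_ ?_ ?_ ?_ ?_ ?_ <;>
    simp only [om0, om1, om2, om3, om4, om5, om6, om7, Pi.add_apply] <;> ring

theorem om_smul_left : om (c • x) z = c • om x z := by
  refine oct_ext ?_ ?_ ?_ ?_ ?_ ?_ ?_ ?_ <;>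
    simp only [om0, om1, om2, om3, om4, om5, om6, om7, Pi.smul_apply, smul_eq_mul] <;> ring

theorem om_zero_left : om 0 z = 0 := by
  refine oct_ext ?_ ?_ ?_ ?_ ?_ ?_ ?_ ?_ <;>
    simp only [om0, om1, om2, om3, om4, om5, om6, om7, Pi.zero_apply] <;> ring

theorem om_neg_right : om x (-y) = -om x y := by
  refine oct_ext ?_ ?_ ?_ ?_ ?_ ?_ ?_ ?_ <;>
    simp only [om0, om1, om2, om3, om4, om5, om6, om7, Pi.neg_apply] <;> ring

theorem Noct_smul_one : Noct (c • (octOne : Fin 8 → F)) = c * c := by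
  simp only [Noct, Pi.smul_apply, smul_eq_mul, oe0, oe1, oe2, oe3, oe4, oe5, oe6, oe7]; ring

theorem Poct_comm : Poct x y = Poct y x := by simp only [Poct]; ring

theorem Poct_smul_right : Poct x (c • y) = c * Poct x y := by
  simp only [Poct, Pi.smul_apply, smul_eq_mul]; ring

theorem Poct_sub_right : Poct x (y - z) = Poct x y - Poct x z := by
  simp only [Poct, Pi.sub_apply]; ring

theorem Poct_sub_left : Poct (x - y) z = Poct x z - Poct y z := by
  simp only [Poct, Pi.sub_apply]; ring

theorem Poct_smul_left : Poct (c • x) z = c * Poct x z := by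
  simp only [Poct, Pi.smul_apply, smul_eq_mul]; ring

end

/-- basis-type vector -/
def ee (j : Fin 8) : Fin 8 → F := fun k => if k = j then 1 else 0

theorem Poct_nondeg {x : Fin 8 → F} (h : ∀ y, Poct x y = 0) : x = 0 := by
  have h4 := h (ee 4); have h0 := h (ee 0); have h5 := h (ee 5); have h1 := h (ee 1)
  have h6 := h (ee 6); have h2 := h (ee 2); have h7 := h (ee 7); have h3 := h (ee 3)
  simp [Poct, ee] at h0 h1 h2 h3 h4 h5 h6 h7
  refine oct_ext ?_ ?_ ?_ ?_ ?_ ?_ ?_ ?_ <;> simp only [Pi.zero_apply] <;> assumption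

/-- dual pairing: for x ≠ 0 there is y with Poct x y = 1 -/
theorem Poct_exists_one {x : Fin 8 → F} (hx : x ≠ 0) : ∃ y, Poct x y = 1 := by
  by_contra h
  push_neg at h
  apply hx
  apply Poct_nondeg
  intro y
  by_contra hy
  exact h ((Poct x y)⁻¹ • y) (by rw [Poct_smul_right, inv_mul_cancel₀ hy])

/-- dual pair separating two non-proportional vectors -/
theorem Poct_exists_pair {a b : Fin 8 → F} (hb : b ≠ 0) (hab : ∀ c : F, a ≠ c • b) :
    ∃ y, Poct a y = 1 ∧ Poct b y = 0 := by
  have key : ∃ y0, Poct b y0 = 0 ∧ Poct a y0 ≠ 0 := by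
    by_contra h
    push_neg at h
    obtain ⟨y1, hy1⟩ := Poct_exists_one hb
    set c := Poct a y1 with hc
    have hall : ∀ y, Poct a y = c * Poct b y := by
      intro y
      have h2 : Poct b (y - Poct b y • y1) = 0 := by
        rw [Poct_sub_right, Poct_smul_right, hy1]; ring
      have h3 := h _ h2
      rw [Poct_sub_right, Poct_smul_right] at h3
      linear_combination h3
    have : a - c • b = 0 := by
      apply Poct_nondeg
      intro y
      rw [Poct_sub_left, Poct_smul_left, ← hall y]; ring
    exact hab c (by rw [sub_eq_zero] at this; exact this)
  obtain ⟨y0, hb0, ha0⟩ := key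
  refine ⟨(Poct a y0)⁻¹ • y0, ?_, ?_⟩
  · rw [Poct_smul_right, inv_mul_cancel₀ ha0]
  · rw [Poct_smul_right, hb0]; ring

/-- L1 : product zero is symmetric for traceless null elements, and implies perpendicularity -/
theorem om_symm {x y : Fin 8 → F} (hTx : Toct x = 0) (hTy : Toct y = 0)
    (hNN : Noct x * Noct y = 0) (h : om x y = 0) : om y x = 0 ∧ Poct x y = 0 := by
  have hI3 : om y x = (-Poct x y) • (octOne : Fin 8 → F) := by
    have h3 := om_I3 x y
    rw [h, hTx, hTy] at h3
    simpa [neg_smul] using h3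
  have hN : Noct (om y x) = 0 := by rw [Noct_mul, mul_comm]; exact hNN
  rw [hI3, Noct_smul_one] at hN
  have hP : Poct x y = 0 := neg_eq_zero.mp (mul_self_eq_zero.mp hN)
  constructor
  · rw [hI3, hP, neg_zero, zero_smul]
  · exact hP

/-- L2 : two elements "collinear" with a common nonzero z are perpendicular -/
theorem om_zero_right (x : Fin 8 → F) : om x 0 = 0 := by
  refine oct_ext ?_ ?_ ?_ ?_ ?_ ?_ ?_ ?_ <;>
    simp only [om0, om1, om2, om3, om4, om5, om6, om7, Pi.zero_apply] <;> ring

theorem om_sub_left (x y z : Fin 8 → F) : om (x - y) z = om x z - om y z := by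
  refine oct_ext ?_ ?_ ?_ ?_ ?_ ?_ ?_ ?_ <;>
    simp only [om0, om1, om2, om3, om4, om5, om6, om7, Pi.sub_apply] <;> ring

theorem Poct_eq_zero_of_common {x y z : Fin 8 → F} (hTx : Toct x = 0) (hTy : Toct y = 0)
    (h1 : om x z = 0) (h2 : om y z = 0) (hz : z ≠ 0) : Poct x y = 0 := by
  have hxy : om x y + om y x = (-Poct x y) • (octOne : Fin 8 → F) := by
    have h3 := om_I3 x y
    rw [hTx, hTy] at h3
    simpa [neg_smul] using h3
  have hI1 := om_I1 x y z
  rw [h1, h2, om_zero_right, om_zero_right, add_zero, hxy, om_smul_left, om_one] at hI1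
  have := hI1.symm
  rw [smul_eq_zero] at this
  rcases this with h | h
  · exact neg_eq_zero.mp h
  · exact absurd h hz

/-- the kernel trick : if om x z = 0 and Poct x y = 1 then z = -om x (om y z) -/
theorem om_ker_trick {x y z : Fin 8 → F} (hTx : Toct x = 0) (hP : Poct x y = 1)
    (hz : om x z = 0) : om x (om y z) = -z := by
  have hxy : om x y + om y x = Toct y • x - (octOne : Fin 8 → F) := by
    have h3 := om_I3 x y
    rw [hTx, hP] at h3
    simpa using h3
  have hI1 := om_I1 x y z
  rw [hz, om_zero_right, add_zero, hxy, om_sub_left, om_smul_left, om_one, hz, smul_zero,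
    zero_sub] at hI1
  exact hI1

/-- traceless null elements square to zero -/
theorem om_self {x : Fin 8 → F} (hT : Toct x = 0) (hN : Noct x = 0) : om x x = 0 := by
  rw [om_CH, hT, hN, zero_smul, zero_smul, sub_zero]

/-- left multiplication as a linear map -/
def OL (x : Fin 8 → F) : (Fin 8 → F) →ₗ[F] (Fin 8 → F) where
  toFun := om x
  map_add' y z := om_add_right x y z
  map_smul' c y := om_smul_right x y c

@[simp] theorem OL_apply (x y : Fin 8 → F) : OL x y = om x y := rfl

theorem OL_range_eq_ker {x : Fin 8 → F} (hT : Toct x = 0) (hN : Noct x = 0) (hx : x ≠ 0) :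
    LinearMap.range (OL x) = LinearMap.ker (OL x) := by
  apply le_antisymm
  · rintro z ⟨w, rfl⟩
    simp only [LinearMap.mem_ker, OL_apply]
    rw [om_alt, om_self hT hN, om_zero_left]
  · intro z hz
    rw [LinearMap.mem_ker, OL_apply] at hz
    obtain ⟨y, hy⟩ := Poct_exists_one hx
    refine ⟨-(om y z), ?_⟩
    simp only [OL_apply]
    rw [om_neg_right, om_ker_trick hT hy hz, neg_neg]

theorem OL_finrank_ker {x : Fin 8 → F} (hT : Toct x = 0) (hN : Noct x = 0) (hx : x ≠ 0) :
    Module.finrank F (LinearMap.ker (OL x)) = 4 := by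
  have h := LinearMap.finrank_range_add_finrank_ker (OL x)
  rw [OL_range_eq_ker hT hN hx] at h
  have h8 : Module.finrank F (Fin 8 → F) = 8 := by
    rw [Module.finrank_pi]; simp
  rw [h8] at h
  omega

set_option synthInstance.maxHeartbeats 1000000 in
set_option maxHeartbeats 1600000 in
theorem claimD {a b : Fin 8 → F} (hTa : Toct a = 0) (hTb : Toct b = 0)
    (hNa : Noct a = 0) (hNb : Noct b = 0) (ha : a ≠ 0) (hb : b ≠ 0)
    (hab : om a b = 0) (hprop : ∀ c : F, a ≠ c • b) :
    LinearMap.ker (OL a) ⊓ LinearMap.ker (OL b) = Submodule.span F {a, b} := by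
  obtain ⟨hba, hPab⟩ := om_symm hTa hTb (by rw [hNa]; ring) hab
  set I := LinearMap.ker (OL a) ⊓ LinearMap.ker (OL b) with hI
  have hIka : I ≤ LinearMap.ker (OL a) := inf_le_left
  have hIkb : I ≤ LinearMap.ker (OL b) := inf_le_right
  set φ : ↥(LinearMap.ker (OL b)) →ₗ[F] (Fin 8 → F) :=
    (OL a).comp (LinearMap.ker (OL b)).subtype with hφ
  have hkerφ : LinearMap.ker φ = Submodule.comap (LinearMap.ker (OL b)).subtype I := by
    ext ⟨z, hz⟩
    simp only [LinearMap.mem_ker, hφ, LinearMap.comp_apply, Submodule.subtype_apply,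
      Submodule.mem_comap, hI, Submodule.mem_inf]
    exact ⟨fun h => ⟨h, hz⟩, fun h => h.1⟩
  have hrangeφ : LinearMap.range φ = I := by
    apply le_antisymm
    · rintro _ ⟨⟨w, hw⟩, rfl⟩
      rw [LinearMap.mem_ker, OL_apply] at hw
      simp only [hφ, LinearMap.comp_apply, Submodule.subtype_apply, hI, Submodule.mem_inf,
        LinearMap.mem_ker, OL_apply]
      constructor
      · rw [om_alt, om_self hTa hNa, om_zero_left]
      · have hI1 := om_I1 b a w
        rw [hw, om_zero_right, add_zero, hba, hab, add_zero, om_zero_left] at hI1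
        exact hI1
    · intro z hz
      rw [hI, Submodule.mem_inf, LinearMap.mem_ker, LinearMap.mem_ker, OL_apply, OL_apply] at hz
      obtain ⟨y, hy1, hy0⟩ := Poct_exists_pair hb hprop
      have hmem : -(om y z) ∈ LinearMap.ker (OL b) := by
        rw [LinearMap.mem_ker, OL_apply, om_neg_right, neg_eq_zero]
        have hby : om b y + om y b = Toct y • b := by
          have h3 := om_I3 b y
          rw [hTb, hy0] at h3
          simpa using h3
        have hI1 := om_I1 b y z
        rw [hz.2, om_zero_right, add_zero, hby, om_smul_left, hz.2, smul_zero] at hI1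
        exact hI1
      refine ⟨⟨-(om y z), hmem⟩, ?_⟩
      simp only [hφ, LinearMap.comp_apply, Submodule.subtype_apply]
      rw [OL_apply, om_neg_right, om_ker_trick hTa hy1 hz.1, neg_neg]
  have e1 : Module.finrank F (LinearMap.ker φ) = Module.finrank F I := by
    rw [hkerφ]
    exact (Submodule.comapSubtypeEquivOfLe hIkb).finrank_eq
  have e2 := LinearMap.finrank_range_add_finrank_ker φ
  rw [hrangeφ, e1, OL_finrank_ker hTb hNb hb] at e2
  have hIfr : Module.finrank F I = 2 := by omega
  have hspan_le : Submodule.span F {a, b} ≤ I := by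
    rw [Submodule.span_le]
    rintro x (rfl | rfl)
    · rw [SetLike.mem_coe, hI, Submodule.mem_inf]
      exact ⟨by rw [LinearMap.mem_ker, OL_apply, om_self hTa hNa],
             by rw [LinearMap.mem_ker, OL_apply]; exact hba⟩
    · rw [SetLike.mem_coe, hI, Submodule.mem_inf]
      exact ⟨by rw [LinearMap.mem_ker, OL_apply]; exact hab,
             by rw [LinearMap.mem_ker, OL_apply, om_self hTb hNb]⟩
  have hli : LinearIndependent F ![a, b] := by
    rw [linearIndependent_fin2]
    constructor
    · simpa using hb
    · intro c hc
      exact hprop c (by simpa using hc.symm)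
  have hfrspan : Module.finrank F (Submodule.span F ({a, b} : Set (Fin 8 → F))) = 2 := by
    have := finrank_span_eq_card hli
    rw [Matrix.range_cons_cons_empty] at this
    simpa using this
  exact (Submodule.eq_of_le_of_finrank_le hspan_le (by rw [hIfr, hfrspan])).symm

/-- embed F⁷ into the split octonions -/
def emb (u : Fin 7 → F) : Fin 8 → F := ![u 0, u 1, u 2, -u 3, u 4, u 5, u 6, u 3]

theorem emb0 (u : Fin 7 → F) : emb u 0 = u 0 := rfl
theorem emb1 (u : Fin 7 → F) : emb u 1 = u 1 := rfl
theorem emb2 (u : Fin 7 → F) : emb u 2 = u 2 := rfl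
theorem emb3 (u : Fin 7 → F) : emb u 3 = -u 3 := rfl
theorem emb4 (u : Fin 7 → F) : emb u 4 = u 4 := rfl
theorem emb5 (u : Fin 7 → F) : emb u 5 = u 5 := rfl
theorem emb6 (u : Fin 7 → F) : emb u 6 = u 6 := rfl
theorem emb7 (u : Fin 7 → F) : emb u 7 = u 3 := rfl

theorem emb_inj {u v : Fin 7 → F} (h : emb u = emb v) : u = v := by
  funext i
  have h0 := congrFun h 0; have h1 := congrFun h 1; have h2 := congrFun h 2
  have h4 := congrFun h 4; have h5 := congrFun h 5; have h6 := congrFun h 6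
  have h7 := congrFun h 7
  rw [emb0, emb0] at h0; rw [emb1, emb1] at h1; rw [emb2, emb2] at h2
  rw [emb4, emb4] at h4; rw [emb5, emb5] at h5; rw [emb6, emb6] at h6
  rw [emb7, emb7] at h7
  fin_cases i <;> assumption

theorem Toct_emb (u : Fin 7 → F) : Toct (emb u) = 0 := by
  simp only [Toct, emb3, emb7]; ring

theorem Noct_emb (u : Fin 7 → F) : Noct (emb u) = quadForm u := by
  simp only [Noct, emb0, emb1, emb2, emb3, emb4, emb5, emb6, emb7, quadForm]; ring

theorem Poct_emb (u v : Fin 7 → F) :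
    Poct (emb u) (emb v) = quadForm (u + v) - quadForm u - quadForm v := by
  simp only [Poct, emb0, emb1, emb2, emb3, emb4, emb5, emb6, emb7, quadForm, Pi.add_apply]; ring

theorem emb_ne_zero {u : Fin 7 → F} (hu : u ≠ 0) : emb u ≠ 0 := by
  intro h
  apply hu
  funext i
  fin_cases i
  exacts [congrFun h 0, congrFun h 1, congrFun h 2,
    (by have := congrFun h 7; rw [emb7] at this; exact this),
    congrFun h 4, congrFun h 5, congrFun h 6]

theorem emb_smul_add (s t : F) (v w : Fin 7 → F) :
    emb (s • v + t • w) = s • emb v + t • emb w := by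
  refine oct_ext ?_ ?_ ?_ ?_ ?_ ?_ ?_ ?_ <;>
    simp only [emb0, emb1, emb2, emb3, emb4, emb5, emb6, emb7, Pi.add_apply, Pi.smul_apply,
      smul_eq_mul] <;> ring

/-- the hexagon conditions force the octonion product to vanish -/
theorem hex_om_zero {u v : Fin 7 → F}
    (hu : quadForm u = 0) (hv : quadForm v = 0) (huv : quadForm (u + v) = 0)
    (e1 : u 1 * v 2 - u 2 * v 1 = u 3 * v 4 - u 4 * v 3)
    (e2 : u 5 * v 4 - u 4 * v 5 = u 3 * v 2 - u 2 * v 3)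
    (e3 : u 2 * v 0 - u 0 * v 2 = u 3 * v 5 - u 5 * v 3)
    (e4 : u 6 * v 5 - u 5 * v 6 = u 3 * v 0 - u 0 * v 3)
    (e5 : u 0 * v 1 - u 1 * v 0 = u 3 * v 6 - u 6 * v 3)
    (e6 : u 4 * v 6 - u 6 * v 4 = u 3 * v 1 - u 1 * v 3) :
    om (emb u) (emb v) = 0 := by
  have hc0 : om (emb u) (emb v) 0 = 0 := by
    rw [om0]; simp only [emb0, emb3, emb5, emb6, emb7]; linear_combination e4
  have hc1 : om (emb u) (emb v) 1 = 0 := by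
    rw [om1]; simp only [emb1, emb3, emb4, emb6, emb7]; linear_combination e6
  have hc2 : om (emb u) (emb v) 2 = 0 := by
    rw [om2]; simp only [emb2, emb3, emb4, emb5, emb7]; linear_combination e2
  have hc4 : om (emb u) (emb v) 4 = 0 := by
    rw [om4]; simp only [emb1, emb2, emb3, emb4, emb7]; linear_combination -e1
  have hc5 : om (emb u) (emb v) 5 = 0 := by
    rw [om5]; simp only [emb0, emb2, emb3, emb5, emb7]; linear_combination -e3
  have hc6 : om (emb u) (emb v) 6 = 0 := by
    rw [om6]; simp only [emb0, emb1, emb3, emb6, emb7]; linear_combination -e5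
  have hsum : om (emb u) (emb v) 3 + om (emb u) (emb v) 7 = 0 := by
    rw [om3, om7]
    simp only [emb0, emb1, emb2, emb3, emb4, emb5, emb6, emb7]
    have := huv
    simp only [quadForm, Pi.add_apply] at this hu hv
    linear_combination -this + hu + hv
  have hNz : Noct (om (emb u) (emb v)) = 0 := by
    rw [Noct_mul, Noct_emb, Noct_emb, hu, hv]; ring
  rw [Noct, hc0, hc1, hc2, hc4, hc5, hc6] at hNz
  have h37 : om (emb u) (emb v) 7 = -om (emb u) (emb v) 3 := by linear_combination hsum
  rw [h37] at hNz
  have hc3 : om (emb u) (emb v) 3 = 0 := by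
    have : om (emb u) (emb v) 3 * om (emb u) (emb v) 3 = 0 := by linear_combination -hNz
    exact mul_self_eq_zero.mp this
  have hc7 : om (emb u) (emb v) 7 = 0 := by rw [h37, hc3, neg_zero]
  exact oct_ext hc0 hc1 hc2 hc3 hc4 hc5 hc6 hc7

set_option synthInstance.maxHeartbeats 1000000 in
set_option maxHeartbeats 1600000 in
theorem core {a0 a1 a2 a3 : Fin 8 → F}
    (hT0 : Toct a0 = 0) (hT1 : Toct a1 = 0) (hT2 : Toct a2 = 0) (hT3 : Toct a3 = 0)
    (hN0 : Noct a0 = 0) (hN1 : Noct a1 = 0) (hN2 : Noct a2 = 0) (hN3 : Noct a3 = 0)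
    (hz0 : a0 ≠ 0) (hz1 : a1 ≠ 0) (hz2 : a2 ≠ 0) (hz3 : a3 ≠ 0)
    (h01 : om a0 a1 = 0) (h12 : om a1 a2 = 0) (h23 : om a2 a3 = 0)
    (hP03 : Poct a0 a3 = 0)
    (np01 : ∀ c : F, a0 ≠ c • a1) (np12 : ∀ c : F, a1 ≠ c • a2) (np23 : ∀ c : F, a2 ≠ c • a3)
    (hs2 : a2 ∉ Submodule.span F {a0, a1}) (hs1 : a1 ∉ Submodule.span F {a2, a3}) :
    False := by
  obtain ⟨h10, hP01⟩ := om_symm hT0 hT1 (by rw [hN0]; ring) h01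
  obtain ⟨h21, hP12⟩ := om_symm hT1 hT2 (by rw [hN1]; ring) h12
  obtain ⟨h32, hP23⟩ := om_symm hT2 hT3 (by rw [hN2]; ring) h23
  have hP02 : Poct a0 a2 = 0 := Poct_eq_zero_of_common hT0 hT2 h01 h21 hz1
  -- no triangle on (a0,a1,a2)
  have htr1 : om a0 a2 ≠ 0 := by
    intro h02
    have hD := claimD hT0 hT1 hN0 hN1 hz0 hz1 h01 np01
    apply hs2
    rw [← hD, Submodule.mem_inf]
    exact ⟨by rw [LinearMap.mem_ker, OL_apply]; exact h02,
           by rw [LinearMap.mem_ker, OL_apply]; exact h12⟩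
  -- no triangle on (a1,a2,a3)
  have htr2 : om a3 a1 ≠ 0 := by
    intro h31
    have hD := claimD hT2 hT3 hN2 hN3 hz2 hz3 h23 np23
    apply hs1
    rw [← hD, Submodule.mem_inf]
    exact ⟨by rw [LinearMap.mem_ker, OL_apply]; exact h21,
           by rw [LinearMap.mem_ker, OL_apply]; exact h31⟩
  set m := om a0 a2 with hm
  have hsum02 : om a0 a2 + om a2 a0 = 0 := by
    have h3 := om_I3 a0 a2
    rw [hT0, hT2, hP02] at h3
    simpa using h3
  have hswap : om a2 a0 = -m := eq_neg_of_add_eq_zero_right hsum02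
  -- m is annihilated by a0, a1, a2, a3
  have hm0 : om a0 m = 0 := by rw [hm, om_alt, om_self hT0 hN0, om_zero_left]
  have hm1 : om a1 m = 0 := by
    have hI1 := om_I1 a1 a2 a0
    rw [h10, om_zero_right, add_zero, h12, h21, add_zero, om_zero_left] at hI1
    rw [hm, ← neg_neg (om a0 a2), ← hswap, om_neg_right, hI1, neg_zero]
  have hm2 : om a2 m = 0 := by
    have hI1 := om_I1 a2 a0 a2
    rw [om_self hT2 hN2, om_zero_right, add_zero] at hI1
    rw [hswap, hm] at hI1
    rw [hm]
    rw [neg_add_cancel, om_zero_left] at hI1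
    exact hI1
  have hm3 : om a3 m = 0 := by
    have hsum03 : om a3 a0 + om a0 a3 = 0 := by
      have h3 := om_I3 a3 a0
      rw [hT0, hT3, Poct_comm, hP03] at h3
      simpa using h3
    have hI1 := om_I1 a3 a0 a2
    rw [h32, om_zero_right, add_zero, hsum03, om_zero_left] at hI1
    rw [hm]
    exact hI1
  -- m lies in span {a1, a2}
  have hDm := claimD hT1 hT2 hN1 hN2 hz1 hz2 h12 np12
  have hmem : m ∈ Submodule.span F {a1, a2} := by
    rw [← hDm, Submodule.mem_inf]
    exact ⟨by rw [LinearMap.mem_ker, OL_apply]; exact hm1,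
           by rw [LinearMap.mem_ker, OL_apply]; exact hm2⟩
  obtain ⟨s, t, hst⟩ := Submodule.mem_span_pair.mp hmem
  have ht : t = 0 := by
    have h := congrArg (om a0) hst
    rw [om_add_right, om_smul_right, om_smul_right, h01, smul_zero, zero_add, hm0] at h
    rcases smul_eq_zero.mp h with h | h
    · exact h
    · exact absurd h htr1
  have hs : s = 0 := by
    have h := congrArg (om a3) hst
    rw [om_add_right, om_smul_right, om_smul_right, h32, smul_zero, add_zero, hm3] at h
    rcases smul_eq_zero.mp h with h | h
    · exact h
    · exact absurd h htr2
  apply htr1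
  rw [← hst, ht, hs, zero_smul, zero_smul, zero_add]

theorem gen_of_finrank_one {W : Submodule F (Fin 7 → F)} (h : Module.finrank F W = 1) :
    ∃ v, v ≠ 0 ∧ W = Submodule.span F {v} := by
  rw [finrank_eq_one_iff'] at h
  obtain ⟨⟨v, hvW⟩, hv0, hgen⟩ := h
  have hvne : v ≠ 0 := by simpa [Submodule.mk_eq_zero] using hv0
  refine ⟨v, hvne, le_antisymm ?_ ?_⟩
  · intro w hw
    obtain ⟨c, hc⟩ := hgen ⟨w, hw⟩
    have : c • v = w := congrArg Subtype.val hc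
    exact Submodule.mem_span_singleton.mpr ⟨c, this⟩
  · rw [Submodule.span_le, Set.singleton_subset_iff]
    exact hvW

theorem notMem_span_step {W0 W1 W2 : Submodule F (Fin 7 → F)} {v0 v1 v2 : Fin 7 → F}
    (hW0 : W0 = Submodule.span F {v0}) (hW1 : W1 = Submodule.span F {v1})
    (hW2 : W2 = Submodule.span F {v2})
    (hfr : Module.finrank F ↥(W0 ⊔ W1) = 2)
    (hfr2 : Module.finrank F ↥(W1 ⊔ W2) = 2)
    (hne : W0 ⊔ W1 ≠ W1 ⊔ W2) :
    v2 ∉ Submodule.span F {v0, v1} := by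
  intro hv2
  apply hne
  have hspan : Submodule.span F ({v0, v1} : Set (Fin 7 → F)) = W0 ⊔ W1 := by
    rw [hW0, hW1, ← Submodule.span_union, Set.singleton_union]
  have hle : W1 ⊔ W2 ≤ W0 ⊔ W1 := by
    apply sup_le
    · exact le_sup_right
    · rw [hW2, Submodule.span_le, Set.singleton_subset_iff, SetLike.mem_coe, ← hspan] at *
      exact hv2
  exact (Submodule.eq_of_le_of_finrank_le hle (by rw [hfr, hfr2])).symm

theorem emb_notMem_span_pair {u v w : Fin 7 → F} (h : u ∉ Submodule.span F {v, w}) :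
    emb u ∉ Submodule.span F {emb v, emb w} := by
  intro hm
  apply h
  obtain ⟨s, t, hst⟩ := Submodule.mem_span_pair.mp hm
  rw [← emb_smul_add] at hst
  exact Submodule.mem_span_pair.mpr ⟨s, t, emb_inj hst⟩

theorem span_flip {u1 u2 u3 : Fin 7 → F} (h3 : u3 ∉ Submodule.span F {u1, u2})
    (np : ∀ c : F, u1 ≠ c • u2) : u1 ∉ Submodule.span F {u2, u3} := by
  intro h
  obtain ⟨s, t, hst⟩ := Submodule.mem_span_pair.mp h
  by_cases ht : t = 0
  · exact np s (by rw [← hst, ht, zero_smul, add_zero])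
  · apply h3
    refine Submodule.mem_span_pair.mpr ⟨t⁻¹, -(t⁻¹ * s), ?_⟩
    have h' : t • u3 = u1 - s • u2 := by
      rw [← hst]; abel
    calc t⁻¹ • u1 + (-(t⁻¹ * s)) • u2 = t⁻¹ • (u1 - s • u2) := by
          rw [smul_sub, smul_smul, neg_smul]; abel
      _ = t⁻¹ • (t • u3) := by rw [h']
      _ = u3 := by rw [smul_smul, inv_mul_cancel₀ ht, one_smul]


/-- Let `(P₀,…,P₅)` be an absolute hexagon: pairwise distinct singular
points such that (indices mod 6) each `P_i + P_{i+1}` is an absolute line and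
`P_i + P_{i+1} ≠ P_{i+1} + P_{i+2}`. Then for each `i`, the subspace `P_i + P_{i+3}`
spanned by two opposite vertices is not totally singular: `Q` does not vanish
identically on it. -/
theorem stmt_16 (q : ℕ) (F : Type) [Field F] [Fintype F] (hq : Fintype.card F = q)
    (P : Fin 6 → Submodule F (Fin 7 → F))
    (hinj : Function.Injective P)
    (hsing : ∀ i, SingularPoint (P i))
    (habs : ∀ i, AbsoluteLine (P i ⊔ P (i + 1)))
    (hne : ∀ i, P i ⊔ P (i + 1) ≠ P (i + 1) ⊔ P (i + 2)) :
    ∀ i : Fin 6, ¬ ∀ x ∈ P i ⊔ P (i + 3), quadForm x = 0 := by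
  intro i hH
  have c11 : (1 : Fin 6) + 1 = 2 := by decide
  have c12 : (1 : Fin 6) + 2 = 3 := by decide
  have c21 : (2 : Fin 6) + 1 = 3 := by decide
  have e11 : i + 1 + 1 = i + 2 := by rw [add_assoc, c11]
  have e12 : i + 1 + 2 = i + 3 := by rw [add_assoc, c12]
  have e21 : i + 2 + 1 = i + 3 := by rw [add_assoc, c21]
  obtain ⟨u0, hu0ne, hP0⟩ := gen_of_finrank_one (hsing i).1
  obtain ⟨u1, hu1ne, hP1⟩ := gen_of_finrank_one (hsing (i+1)).1
  obtain ⟨u2, hu2ne, hP2⟩ := gen_of_finrank_one (hsing (i+2)).1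
  obtain ⟨u3, hu3ne, hP3⟩ := gen_of_finrank_one (hsing (i+3)).1
  have m0 : u0 ∈ P i := by rw [hP0]; exact Submodule.mem_span_singleton_self u0
  have m1 : u1 ∈ P (i+1) := by rw [hP1]; exact Submodule.mem_span_singleton_self u1
  have m2 : u2 ∈ P (i+2) := by rw [hP2]; exact Submodule.mem_span_singleton_self u2
  have m3 : u3 ∈ P (i+3) := by rw [hP3]; exact Submodule.mem_span_singleton_self u3
  have hQ0 : quadForm u0 = 0 := (hsing i).2 u0 m0
  have hQ1 : quadForm u1 = 0 := (hsing (i+1)).2 u1 m1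
  have hQ2 : quadForm u2 = 0 := (hsing (i+2)).2 u2 m2
  have hQ3 : quadForm u3 = 0 := (hsing (i+3)).2 u3 m3
  have habs0 := habs i
  have habs1 := habs (i+1); rw [e11] at habs1
  have habs2 := habs (i+2); rw [e21] at habs2
  have hne1 := hne (i+1); rw [e11, e12] at hne1
  -- line data
  have hB01 : quadForm (u0 + u1) = 0 :=
    habs0.1.2 _ (add_mem (Submodule.mem_sup_left m0) (Submodule.mem_sup_right m1))
  have hB12 : quadForm (u1 + u2) = 0 :=
    habs1.1.2 _ (add_mem (Submodule.mem_sup_left m1) (Submodule.mem_sup_right m2))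
  have hB23 : quadForm (u2 + u3) = 0 :=
    habs2.1.2 _ (add_mem (Submodule.mem_sup_left m2) (Submodule.mem_sup_right m3))
  have hex01 : HexEq u0 u1 :=
    habs0.2 u0 (Submodule.mem_sup_left m0) u1 (Submodule.mem_sup_right m1)
  have hex12 : HexEq u1 u2 :=
    habs1.2 u1 (Submodule.mem_sup_left m1) u2 (Submodule.mem_sup_right m2)
  have hex23 : HexEq u2 u3 :=
    habs2.2 u2 (Submodule.mem_sup_left m2) u3 (Submodule.mem_sup_right m3)
  have hB03 : quadForm (u0 + u3) = 0 :=
    hH _ (add_mem (Submodule.mem_sup_left m0) (Submodule.mem_sup_right m3))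
  -- octonion products vanish on consecutive pairs
  obtain ⟨x1, x2, x3, x4, x5, x6⟩ := hex01
  have h01 : om (emb u0) (emb u1) = 0 := hex_om_zero hQ0 hQ1 hB01 x1 x2 x3 x4 x5 x6
  obtain ⟨y1, y2, y3, y4, y5, y6⟩ := hex12
  have h12 : om (emb u1) (emb u2) = 0 := hex_om_zero hQ1 hQ2 hB12 y1 y2 y3 y4 y5 y6
  obtain ⟨z1, z2, z3, z4, z5, z6⟩ := hex23
  have h23 : om (emb u2) (emb u3) = 0 := hex_om_zero hQ2 hQ3 hB23 z1 z2 z3 z4 z5 z6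
  have hP03 : Poct (emb u0) (emb u3) = 0 := by
    rw [Poct_emb, hB03, hQ0, hQ3]; ring
  -- non-proportionality
  have npu : ∀ (j k : Fin 6) (v w : Fin 7 → F), v ≠ 0 → P j = Submodule.span F {v} →
      P k = Submodule.span F {w} → j ≠ k → ∀ c : F, v ≠ c • w := by
    intro j k v w hv hPj hPk hjk c hc
    apply hjk; apply hinj
    have hc0 : c ≠ 0 := by rintro rfl; rw [zero_smul] at hc; exact hv hc
    rw [hPj, hPk, hc]
    apply le_antisymm
    · rw [Submodule.span_le, Set.singleton_subset_iff, SetLike.mem_coe]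
      exact Submodule.smul_mem _ c (Submodule.mem_span_singleton_self w)
    · rw [Submodule.span_le, Set.singleton_subset_iff, SetLike.mem_coe]
      exact Submodule.mem_span_singleton.mpr ⟨c⁻¹, by rw [smul_smul, inv_mul_cancel₀ hc0, one_smul]⟩
  have hii1 : i ≠ i + 1 := fun h => by
    have := left_eq_add.mp h; exact absurd this (by decide)
  have hii2 : i + 1 ≠ i + 2 := fun h => by
    have := add_left_cancel h; exact absurd this (by decide)
  have hii3 : i + 2 ≠ i + 3 := fun h => by
    have := add_left_cancel h; exact absurd this (by decide)
  have np01u : ∀ c : F, u0 ≠ c • u1 := npu i (i+1) u0 u1 hu0ne hP0 hP1 hii1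
  have np12u : ∀ c : F, u1 ≠ c • u2 := npu (i+1) (i+2) u1 u2 hu1ne hP1 hP2 hii2
  have np23u : ∀ c : F, u2 ≠ c • u3 := npu (i+2) (i+3) u2 u3 hu2ne hP2 hP3 hii3
  have emb_smul : ∀ (c : F) (v : Fin 7 → F), c • emb v = emb (c • v) := by
    intro c v
    have := emb_smul_add c 0 v v
    rw [zero_smul, add_zero, zero_smul, add_zero] at this
    exact this.symm
  have np01 : ∀ c : F, emb u0 ≠ c • emb u1 := fun c h =>
    np01u c (emb_inj (by rw [h, emb_smul]))
  have np12 : ∀ c : F, emb u1 ≠ c • emb u2 := fun c h =>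
    np12u c (emb_inj (by rw [h, emb_smul]))
  have np23 : ∀ c : F, emb u2 ≠ c • emb u3 := fun c h =>
    np23u c (emb_inj (by rw [h, emb_smul]))
  -- span non-membership
  have hs2u : u2 ∉ Submodule.span F {u0, u1} :=
    notMem_span_step hP0 hP1 hP2 habs0.1.1 habs1.1.1 (hne i)
  have hs3u : u3 ∉ Submodule.span F {u1, u2} :=
    notMem_span_step hP1 hP2 hP3 habs1.1.1 habs2.1.1 hne1
  have hs1u : u1 ∉ Submodule.span F {u2, u3} := span_flip hs3u np12u
  exact core (Toct_emb u0) (Toct_emb u1) (Toct_emb u2) (Toct_emb u3)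
    (by rw [Noct_emb, hQ0]) (by rw [Noct_emb, hQ1]) (by rw [Noct_emb, hQ2])
    (by rw [Noct_emb, hQ3])
    (emb_ne_zero hu0ne) (emb_ne_zero hu1ne) (emb_ne_zero hu2ne) (emb_ne_zero hu3ne)
    h01 h12 h23 hP03 np01 np12 np23
    (emb_notMem_span_pair hs2u) (emb_notMem_span_pair hs1u)
end

section
/- Let n ≥ 1, q = 2ⁿ, and let F be a finite field with q³ elements (of characteristic 2). Let α be the automorphism of SL(2,F) applying the field automorphism x ↦ x^q to each matrix entry. Suppose ρ₀, ρ₂ ∈ SL(2,F) are commuting involutions with ρ₀ ≠ ρ₂, α(ρ₀) = ρ₂ and α(ρ₂) = ρ₀ρ₂, and let H = {1, ρ₀, ρ₂, ρ₀ρ₂} be the subgroup they generate. Then the number of right cosets H·x of H in SL(2,F) that are α-invariant (that is, α maps the set H·x onto itself) equals q³ − q. -/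
/-!
The map `α` is the endomorphism of `SL(2, F)` induced by the ring map `x ↦ x ^ q`, and it permutes
`H = {1, ρ₀, ρ₂, ρ₀ρ₂}` cyclically, fixing only `1`. Hence the Lang map `k ↦ k⁻¹ α(k)` is a
bijection of `H`, so every `α`-invariant coset `Hx` contains exactly one `α`-fixed element, and the
invariant cosets are counted by the fixed points of `α`. These form `SL(2, K)` for the fixed field
`K = {x | x ^ q = x}`, which has `q` elements because `q - 1 ∣ q ^ 3 - 1`; so there are
`|SL(2, q)| = q ^ 3 - q` of them.
-/

section RightCosets

variable {G : Type*} [Group G] {H : Subgroup G}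

theorem Subgroup.image_mul_right_eq_iff {x y : G} :
    (fun g => g * x) '' (H : Set G) = (fun g => g * y) '' H ↔ y * x⁻¹ ∈ H := by
  simp only [← op_smul_eq_mul, Set.image_smul]
  exact rightCoset_eq_iff H

theorem Subgroup.image_mul_right_mul_of_mem {k : G} (hk : k ∈ H) (x : G) :
    (fun g => g * (k * x)) '' (H : Set G) = (fun g => g * x) '' H := by
  rw [image_mul_right_eq_iff, mul_inv_rev, mul_inv_cancel_left]
  exact H.inv_mem hk

variable (σ : G →* G)

theorem MonoidHom.image_image_mul_right (hH : H.map σ = H) (x : G) :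
    σ '' ((fun g => g * x) '' H) = (fun g => g * σ x) '' H := by
  conv_rhs => rw [← hH, Subgroup.coe_map, Set.image_image]
  simp only [Set.image_image, map_mul]

-- Lang's theorem for `H`: the map `k ↦ k⁻¹ * σ k` is injective on the finite set `H`, hence onto.
theorem MonoidHom.exists_mem_apply_eq_mul [Finite H] (hH : H.map σ = H)
    (hfix : ∀ h ∈ H, σ h = h → h = 1) {h : G} (hh : h ∈ H) : ∃ k ∈ H, σ k = k * h := by
  have hmaps : Set.MapsTo (fun k => k⁻¹ * σ k) (H : Set G) H := fun k hk =>
    H.mul_mem (H.inv_mem hk) (hH.le ⟨k, hk, rfl⟩)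
  have hinj : Set.InjOn (fun k => k⁻¹ * σ k) (H : Set G) := by
    intro k hk k' hk' hkk'
    have hσk' : σ k' = k' * k⁻¹ * σ k := by
      rw [mul_assoc, show k⁻¹ * σ k = k'⁻¹ * σ k' from hkk', mul_inv_cancel_left]
    have hquot : σ (k' * k⁻¹) = k' * k⁻¹ := by
      rw [map_mul, map_inv, hσk', mul_inv_cancel_right]
    rw [eq_comm, ← mul_inv_eq_one]
    exact hfix _ (H.mul_mem hk' (H.inv_mem hk)) hquot
  obtain ⟨k, hk, hlang⟩ :=
    ((Set.toFinite _).injOn_iff_bijOn_of_mapsTo hmaps |>.mp hinj).surjOn hh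
  exact ⟨k, hk, by rw [← hlang, mul_inv_cancel_left]⟩

theorem MonoidHom.ncard_invariant_rightCosets [Finite H] (hH : H.map σ = H)
    (hfix : ∀ h ∈ H, σ h = h → h = 1) :
    {s : Set G | (∃ x, s = (fun g => g * x) '' H) ∧ σ '' s = s}.ncard =
      {x | σ x = x}.ncard := by
  have hcosets : {s : Set G | (∃ x, s = (fun g => g * x) '' H) ∧ σ '' s = s} =
      (fun y => (fun g => g * y) '' (H : Set G)) '' {x | σ x = x} := by
    ext s
    constructor
    · rintro ⟨⟨x, rfl⟩, hinv⟩
      rw [image_image_mul_right σ hH, Subgroup.image_mul_right_eq_iff] at hinv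
      obtain ⟨k, hk, hσk⟩ := exists_mem_apply_eq_mul σ hH hfix hinv
      refine ⟨k * x, ?_, Subgroup.image_mul_right_mul_of_mem hk x⟩
      show σ (k * x) = k * x
      rw [map_mul, hσk, mul_assoc, inv_mul_cancel_right]
    · rintro ⟨y, hy, rfl⟩
      exact ⟨⟨y, rfl⟩, by rw [image_image_mul_right σ hH, hy]⟩
  have hinj : Set.InjOn (fun y => (fun g => g * y) '' (H : Set G)) {x | σ x = x} := by
    intro y hy y' hy' hyy'
    have hmem := Subgroup.image_mul_right_eq_iff.mp hyy'
    have hfixed : σ (y' * y⁻¹) = y' * y⁻¹ := by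
      rw [map_mul, map_inv, show σ y = y from hy, show σ y' = y' from hy']
    rw [eq_comm, ← mul_inv_eq_one]
    exact hfix _ hmem hfixed
  rw [hcosets, hinj.ncard_image]

end RightCosets

section KleinFour

variable {G : Type*} [Group G] {a b : G}

theorem Subgroup.eq_one_or_of_mem_closure_pair (ha : a ^ 2 = 1) (hb : b ^ 2 = 1)
    (hab : Commute a b) {x : G} (hx : x ∈ Subgroup.closure {a, b}) :
    x = 1 ∨ x = a ∨ x = b ∨ x = a * b := by
  have haa : a * a = 1 := by rw [← sq, ha]
  have hbb : b * b = 1 := by rw [← sq, hb]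
  have haa' (y : G) : a * (a * y) = y := by rw [← mul_assoc, haa, one_mul]
  have hba' (y : G) : b * (a * y) = a * (b * y) := by rw [← mul_assoc, ← hab.eq, mul_assoc]
  induction hx using Subgroup.closure_induction with
  | mem x hx => rcases hx with rfl | rfl <;> simp
  | one => simp
  | mul x y _ _ hx hy =>
    rcases hx with rfl | rfl | rfl | rfl <;> rcases hy with rfl | rfl | rfl | rfl <;>
      simp only [one_mul, mul_one, mul_assoc, haa, hbb, hab.eq.symm, haa', hba'] <;> tauto
  | inv x _ hx =>
    rcases hx with rfl | rfl | rfl | rfl <;>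
      simp [mul_inv_rev, inv_eq_of_mul_eq_one_right haa, inv_eq_of_mul_eq_one_right hbb, hab.eq]

theorem Subgroup.map_closure_pair_eq (σ : G →* G) (hσa : σ a = b) (hσb : σ b = a * b) :
    (closure {a, b}).map σ = closure {a, b} := by
  have ha : a ∈ closure {a, b} := subset_closure (Set.mem_insert a _)
  have hb : b ∈ closure {a, b} := subset_closure (Set.mem_insert_of_mem a rfl)
  rw [MonoidHom.map_closure, Set.image_pair, hσa, hσb]
  apply le_antisymm
  · rw [closure_le, Set.insert_subset_iff, Set.singleton_subset_iff]
    exact ⟨hb, mul_mem ha hb⟩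
  · have hb' : b ∈ closure {b, a * b} := subset_closure (Set.mem_insert b _)
    have hab' : a * b ∈ closure {b, a * b} := subset_closure (Set.mem_insert_of_mem b rfl)
    rw [closure_le, Set.insert_subset_iff, Set.singleton_subset_iff]
    refine ⟨?_, hb'⟩
    simpa using mul_mem hab' (inv_mem hb')

theorem Subgroup.eq_one_of_mem_closure_pair_of_apply_eq (σ : G →* G) (ha : a ^ 2 = 1)
    (hb : b ^ 2 = 1) (hab : Commute a b) (hσa : σ a = b) (hσb : σ b = a * b) (ha1 : a ≠ 1)
    (hb1 : b ≠ 1) (hne : a ≠ b) {x : G} (hx : x ∈ closure {a, b}) (hσx : σ x = x) : x = 1 := by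
  rcases eq_one_or_of_mem_closure_pair ha hb hab hx with rfl | rfl | rfl | rfl
  · rfl
  · exact absurd (hσa.symm.trans hσx) hne.symm
  · exact absurd (mul_eq_right.mp (hσb.symm.trans hσx)) ha1
  · have hσab : σ (a * b) = a := by
      rw [map_mul, hσa, hσb, ← mul_assoc, ← hab.eq, mul_assoc, ← sq, hb, mul_one]
    exact absurd (mul_eq_left.mp (hσab.symm.trans hσx).symm) hb1

end KleinFour

namespace Matrix.SpecialLinearGroup

variable {n : Type*} [Fintype n] [DecidableEq n] {R : Type*} [CommRing R]

theorem map_injective {S : Type*} [CommRing S] {f : R →+* S} (hf : Function.Injective f) :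
    Function.Injective (map f : SpecialLinearGroup n R → SpecialLinearGroup n S) := fun A B h => by
  ext i j
  exact hf (congrArg (fun M : SpecialLinearGroup n S => M i j) h)

theorem range_map_subtype {S : Type*} [SetLike S R] [SubringClass S R] (s : S) :
    Set.range (map (SubringClass.subtype s) : SpecialLinearGroup n s → SpecialLinearGroup n R) =
      {A | ∀ i j, A i j ∈ s} := by
  ext A
  constructor
  · rintro ⟨B, rfl⟩ i j
    exact (B i j).2
  · intro hA
    let B : Matrix n n s := Matrix.of fun i j => ⟨A i j, hA i j⟩
    have hBA : (SubringClass.subtype s).mapMatrix B = A := rfl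
    have hdet : B.det = 1 := Subtype.val_injective <| by
      simpa [hBA] using (SubringClass.subtype s).map_det B
    exact ⟨⟨B, hdet⟩, Subtype.ext hBA⟩

theorem ncard_setOf_map_eq_self {S : Type*} [SetLike S R] [SubringClass S R] (φ : R →+* R)
    (s : S) (hs : ∀ x, x ∈ s ↔ φ x = x) :
    {A : SpecialLinearGroup n R | map φ A = A}.ncard = Nat.card (SpecialLinearGroup n s) := by
  have hfixed : {A : SpecialLinearGroup n R | map φ A = A} =
      Set.range (map (SubringClass.subtype s)) := by
    ext A
    simp [range_map_subtype, hs, SpecialLinearGroup.ext_iff]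
  rw [hfixed, Set.ncard_range_of_injective (map_injective Subtype.val_injective)]

theorem card_GL_eq_card_units_mul [Nonempty n] :
    Nat.card (GL n R) = Nat.card Rˣ * Nat.card (SpecialLinearGroup n R) := by
  have hrange : (toGL : SpecialLinearGroup n R →* GL n R).range = GeneralLinearGroup.det.ker := by
    ext g
    constructor
    · rintro ⟨A, rfl⟩
      exact Units.ext A.2
    · intro hg
      exact ⟨⟨g, congrArg Units.val hg⟩, Units.ext rfl⟩
  rw [Nat.card_congr (MonoidHom.ofInjective toGL_injective).toEquiv, hrange,
    ← Nat.card_congr (QuotientGroup.quotientKerEquivOfSurjective _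
      (GeneralLinearGroup.det_surjective (n := n))).toEquiv]
  exact Subgroup.card_eq_card_quotient_mul_card_subgroup _

theorem card_fin_two (K : Type*) [Field K] [Finite K] :
    Nat.card (SpecialLinearGroup (Fin 2) K) = Nat.card K ^ 3 - Nat.card K := by
  have := Fintype.ofFinite K
  have hGL := card_GL_eq_card_units_mul (n := Fin 2) (R := K)
  rw [Matrix.card_GL_field, Fin.prod_univ_two, Nat.card_units, ← Nat.card_eq_fintype_card] at hGL
  simp only [Fin.val_zero, Fin.val_one, pow_zero, pow_one] at hGL
  set q := Nat.card K
  have hq : 1 < q := Finite.one_lt_card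
  have hfactor : (q ^ 2 - 1) * (q ^ 2 - q) = (q - 1) * (q ^ 3 - q) := by
    have h2 : q ≤ q ^ 2 := Nat.le_self_pow two_ne_zero q
    have h3 : q ≤ q ^ 3 := Nat.le_self_pow three_ne_zero q
    zify [hq.le, h2, h3, Nat.one_le_pow 2 q (by omega)]
    ring
  exact Nat.eq_of_mul_eq_mul_left (by omega) (hGL.symm.trans hfactor)

end Matrix.SpecialLinearGroup

theorem FiniteField.ncard_setOf_pow_eq_self {F : Type*} [Field F] [Finite F] {q : ℕ} (hq : 0 < q)
    (hdvd : q - 1 ∣ Nat.card F - 1) : {x : F | x ^ q = x}.ncard = q := by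
  let μ : Subgroup Fˣ := (powMonoidHom (q - 1) : Fˣ →* Fˣ).ker
  have hμ : Nat.card μ = q - 1 := by
    rw [IsCyclic.card_powMonoidHom_ker, Nat.card_units, Nat.gcd_eq_right hdvd]
  have hpow (x : F) : x ^ q = x ^ (q - 1) * x := by rw [← pow_succ, Nat.sub_add_cancel hq]
  have hset : {x : F | x ^ q = x} = insert 0 (Units.val '' (μ : Set Fˣ)) := by
    ext x
    rcases eq_or_ne x 0 with rfl | hx
    · simp [zero_pow hq.ne']
    · simp only [Set.mem_ofPred_eq, Set.mem_insert_iff, hx, false_or, hpow, mul_eq_right₀ hx]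
      constructor
      · intro hx1
        exact ⟨Units.mk0 x hx, Units.ext hx1, rfl⟩
      · rintro ⟨u, hu, rfl⟩
        exact congrArg Units.val hu
  rw [hset, Set.ncard_insert_of_notMem (by simp), Set.ncard_image_of_injective _ Units.val_injective,
    ← Nat.card_coe_set_eq, SetLike.coe_sort_coe, hμ, Nat.sub_add_cancel hq]

theorem stmt_18_general (n : ℕ) (q : ℕ) (hq : q = 2 ^ n)
    (F : Type) [Field F] [Fintype F] [CharP F 2] (hF : Fintype.card F = q ^ 3)
    (α : Matrix.SpecialLinearGroup (Fin 2) F → Matrix.SpecialLinearGroup (Fin 2) F)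
    (hα : ∀ (A : Matrix.SpecialLinearGroup (Fin 2) F) (i j : Fin 2),
      ((α A : Matrix (Fin 2) (Fin 2) F)) i j = ((A : Matrix (Fin 2) (Fin 2) F) i j) ^ q)
    (ρ₀ ρ₂ : Matrix.SpecialLinearGroup (Fin 2) F)
    (h0 : ρ₀ ≠ 1) (h2 : ρ₂ ≠ 1) (hne : ρ₀ ≠ ρ₂)
    (hsq0 : ρ₀ ^ 2 = 1) (hsq2 : ρ₂ ^ 2 = 1) (hcomm : ρ₀ * ρ₂ = ρ₂ * ρ₀)
    (ha0 : α ρ₀ = ρ₂) (ha2 : α ρ₂ = ρ₀ * ρ₂) :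
    {s : Set (Matrix.SpecialLinearGroup (Fin 2) F) |
        (∃ x, s = (fun g => g * x) ''
          ((Subgroup.closure {ρ₀, ρ₂} : Subgroup (Matrix.SpecialLinearGroup (Fin 2) F)) :
            Set (Matrix.SpecialLinearGroup (Fin 2) F))) ∧
        α '' s = s}.ncard = q ^ 3 - q := by
  have : ExpChar F 2 := ExpChar.prime Nat.prime_two
  let φ : F →+* F := iterateFrobenius F 2 n
  have hφ (x : F) : φ x = x ^ q := by rw [iterateFrobenius_def, hq]
  obtain rfl : α = Matrix.SpecialLinearGroup.map φ := by
    funext A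
    ext i j
    simp [hα, hφ]
  let K := φ.eqLocusField (RingHom.id F)
  have hK : Nat.card K = q := by
    have hKset : (K : Set F) = {x | x ^ q = x} := by ext x; exact (hφ x).congr_left
    rw [← SetLike.coe_sort_coe, Nat.card_coe_set_eq, hKset]
    refine FiniteField.ncard_setOf_pow_eq_self (by rw [hq]; positivity) ?_
    simpa [Nat.card_eq_fintype_card, hF] using Nat.sub_dvd_pow_sub_pow q 1 3
  rw [MonoidHom.ncard_invariant_rightCosets _
      (Subgroup.map_closure_pair_eq _ ha0 ha2)
      (fun _ hx => Subgroup.eq_one_of_mem_closure_pair_of_apply_eq _ hsq0 hsq2 hcomm ha0 ha2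
        h0 h2 hne hx),
    Matrix.SpecialLinearGroup.ncard_setOf_map_eq_self φ K (fun _ => Iff.rfl),
    Matrix.SpecialLinearGroup.card_fin_two, hK]

/-- Let `q = 2ⁿ` (`n ≥ 1`) and `F` a finite field of characteristic `2`
with `q³` elements. Let `α` be the automorphism of `SL(2,F)` applying `x ↦ x^q` to each
entry, and let `ρ₀, ρ₂` be distinct commuting involutions with `α ρ₀ = ρ₂` and
`α ρ₂ = ρ₀ρ₂`, generating `H = {1, ρ₀, ρ₂, ρ₀ρ₂}`. Then the number of `α`-invariant
right cosets of `H` in `SL(2,F)` equals `q³ − q`. -/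
theorem stmt_18 (n : ℕ) (hn : 1 ≤ n) (q : ℕ) (hq : q = 2 ^ n)
    (F : Type) [Field F] [Fintype F] [CharP F 2] (hF : Fintype.card F = q ^ 3)
    (α : Matrix.SpecialLinearGroup (Fin 2) F → Matrix.SpecialLinearGroup (Fin 2) F)
    (hα : ∀ (A : Matrix.SpecialLinearGroup (Fin 2) F) (i j : Fin 2),
      ((α A : Matrix (Fin 2) (Fin 2) F)) i j = ((A : Matrix (Fin 2) (Fin 2) F) i j) ^ q)
    (ρ₀ ρ₂ : Matrix.SpecialLinearGroup (Fin 2) F)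
    (h0 : ρ₀ ≠ 1) (h2 : ρ₂ ≠ 1) (hne : ρ₀ ≠ ρ₂)
    (hsq0 : ρ₀ ^ 2 = 1) (hsq2 : ρ₂ ^ 2 = 1) (hcomm : ρ₀ * ρ₂ = ρ₂ * ρ₀)
    (ha0 : α ρ₀ = ρ₂) (ha2 : α ρ₂ = ρ₀ * ρ₂) :
    {s : Set (Matrix.SpecialLinearGroup (Fin 2) F) |
        (∃ x, s = (fun g => g * x) ''
          ((Subgroup.closure {ρ₀, ρ₂} : Subgroup (Matrix.SpecialLinearGroup (Fin 2) F)) :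
            Set (Matrix.SpecialLinearGroup (Fin 2) F))) ∧
        α '' s = s}.ncard = q ^ 3 - q :=
  stmt_18_general n q hq F hF α hα ρ₀ ρ₂ h0 h2 hne hsq0 hsq2 hcomm ha0 ha2
end
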